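/- arXiv:2104.08745 — 9 statements merged into one kernel-verified Lean document; each statement's English description precedes it below -/
import Mathlib

section
/- Let E be a directed partially ordered vector space, F a monotone complete partially ordered vector space, and let (T_λ) be an increasing net of regular operators from E to F. Then (T_λ) is bounded above in the space of regular operators L^r(E,F) if and only if for every x in E⁺ the net (T_λ x) is bounded above in F; in that case the net has a supremum T in L^r(E,F) given pointwise on E⁺ by Tx = ⋁_λ T_λ x. -/
/-!
The pointwise suprema `g x = ⋁_λ T_λ x`, `x ∈ E⁺`, exist by monotone completeness, since an
increasing net over a directed index set has a directed range. Because the net is increasing,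
`g` is additive and positively homogeneous on `E⁺`, and as `E = E⁺ - E⁺` it extends uniquely to a
linear map `T`. This `T` dominates every `T_λ`, so `T = (T - T_λ) + T_λ` is regular, and it lies
below every regular upper bound of the net because it is the pointwise supremum on `E⁺`.
-/

/-- A linear operator between partially ordered vector spaces is positive if it
maps the positive cone into the positive cone. -/
def IsPosOp {E F : Type*} [AddCommGroup E] [PartialOrder E] [Module ℝ E]
    [AddCommGroup F] [PartialOrder F] [Module ℝ F] (T : E →ₗ[ℝ] F) : Prop :=
  ∀ x : E, 0 ≤ x → 0 ≤ T x

/-- A linear operator is regular if it is the difference of two positive operators. -/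
def IsRegOp {E F : Type*} [AddCommGroup E] [PartialOrder E] [Module ℝ E]
    [AddCommGroup F] [PartialOrder F] [Module ℝ F] (T : E →ₗ[ℝ] F) : Prop :=
  ∃ P Q : E →ₗ[ℝ] F, IsPosOp P ∧ IsPosOp Q ∧ T = P - Q

open Set
open scoped Pointwise

section LUB

variable {Λ F : Type*}

theorem Monotone.isLUB_range_add [Preorder Λ] [IsDirectedOrder Λ] [AddCommGroup F]
    [PartialOrder F] [IsOrderedAddMonoid F] {f g : Λ → F} (hf : Monotone f) (hg : Monotone g)
    {a b : F} (ha : IsLUB (range f) a) (hb : IsLUB (range g) b) :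
    IsLUB (range fun l => f l + g l) (a + b) := by
  refine ⟨?_, fun u hu => (ha.add hb).2 ?_⟩
  · rintro _ ⟨l, rfl⟩
    exact add_le_add (ha.1 ⟨l, rfl⟩) (hb.1 ⟨l, rfl⟩)
  · rintro _ ⟨_, ⟨l, rfl⟩, _, ⟨m, rfl⟩, rfl⟩
    obtain ⟨c, hlc, hmc⟩ := directed_of (· ≤ ·) l m
    exact (add_le_add (hf hlc) (hg hmc)).trans (hu ⟨c, rfl⟩)

theorem IsLUB.smul_of_pos {𝕜 : Type*} [Field 𝕜] [LinearOrder 𝕜] [IsStrictOrderedRing 𝕜]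
    [AddCommGroup F] [PartialOrder F] [Module 𝕜 F] [PosSMulMono 𝕜 F] {s : Set F} {a : F}
    (h : IsLUB s a) {c : 𝕜} (hc : 0 < c) : IsLUB (c • s) (c • a) := by
  refine ⟨smul_upperBounds_subset_upperBounds_smul_of_nonneg hc.le ⟨a, h.1, rfl⟩, fun u hu => ?_⟩
  have hu' : c⁻¹ • u ∈ upperBounds s := fun x hx => by
    simpa [inv_smul_smul₀ hc.ne'] using
      smul_le_smul_of_nonneg_left (hu ⟨x, hx, rfl⟩) (inv_nonneg.2 hc.le)
  simpa [smul_inv_smul₀ hc.ne'] using smul_le_smul_of_nonneg_left (h.2 hu') hc.le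

end LUB

theorem sub_eq_sub_of_additiveOn_nonneg {E F : Type*} [AddCommGroup E] [PartialOrder E]
    [AddCommGroup F] {g : E → F} (hadd : ∀ x y : E, 0 ≤ x → 0 ≤ y → g (x + y) = g x + g y)
    {y z y' z' : E} (hy : 0 ≤ y) (hz : 0 ≤ z) (hy' : 0 ≤ y') (hz' : 0 ≤ z')
    (h : y - z = y' - z') : g y - g z = g y' - g z' := by
  rw [sub_eq_sub_iff_add_eq_add] at h ⊢
  rw [← hadd _ _ hy hz', ← hadd _ _ hy' hz, h]

theorem exists_linearMap_eqOn_nonneg {𝕜 E F : Type*} [Field 𝕜] [LinearOrder 𝕜]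
    [IsStrictOrderedRing 𝕜] [AddCommGroup E] [PartialOrder E] [IsOrderedAddMonoid E]
    [Module 𝕜 E] [PosSMulMono 𝕜 E] [AddCommGroup F] [Module 𝕜 F]
    (hE : ∀ x : E, ∃ y z : E, 0 ≤ y ∧ 0 ≤ z ∧ x = y - z) (g : E → F)
    (hadd : ∀ x y : E, 0 ≤ x → 0 ≤ y → g (x + y) = g x + g y)
    (hsmul : ∀ c : 𝕜, 0 < c → ∀ x : E, 0 ≤ x → g (c • x) = c • g x) :
    ∃ L : E →ₗ[𝕜] F, ∀ x : E, 0 ≤ x → L x = g x := by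
  have g_zero : g 0 = 0 := by simpa using hadd 0 0 le_rfl le_rfl
  have hsmul₀ (c : 𝕜) (hc : 0 ≤ c) (x : E) (hx : 0 ≤ x) : g (c • x) = c • g x := by
    rcases hc.eq_or_lt with rfl | hc
    · simp [g_zero]
    · exact hsmul c hc x hx
  choose p q hp hq hpq using hE
  have g_sub (x : E) {y z : E} (hy : 0 ≤ y) (hz : 0 ≤ z) (h : y - z = x) :
      g (p x) - g (q x) = g y - g z :=
    sub_eq_sub_of_additiveOn_nonneg hadd (hp x) (hq x) hy hz (by rw [h, ← hpq])
  refine ⟨{ toFun := fun x => g (p x) - g (q x)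
            map_add' := fun x y => ?_
            map_smul' := fun c x => ?_ }, fun x hx => ?_⟩
  · rw [g_sub (x + y) (add_nonneg (hp x) (hp y)) (add_nonneg (hq x) (hq y))
      (by rw [← sub_add_sub_comm, ← hpq, ← hpq]), hadd _ _ (hp x) (hp y),
      hadd _ _ (hq x) (hq y)]
    abel
  · rcases le_or_gt 0 c with hc | hc
    · rw [g_sub (c • x) (smul_nonneg hc (hp x)) (smul_nonneg hc (hq x))
        (by rw [← smul_sub, ← hpq]), hsmul₀ c hc _ (hp x), hsmul₀ c hc _ (hq x)]
      simp [smul_sub]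
    · have hc' : 0 ≤ -c := by linarith
      rw [g_sub (c • x) (smul_nonneg hc' (hq x)) (smul_nonneg hc' (hp x))
        (by rw [← smul_sub, neg_smul, ← smul_neg, neg_sub, ← hpq]), hsmul₀ _ hc' _ (hq x),
        hsmul₀ _ hc' _ (hp x)]
      simp only [RingHom.id_apply]
      module
  · change g (p x) - g (q x) = g x
    rw [g_sub x hx le_rfl (sub_zero x), g_zero, sub_zero]

theorem exists_linearMap_isLUB_of_monotone {𝕜 E F Λ : Type*} [Field 𝕜] [LinearOrder 𝕜]
    [IsStrictOrderedRing 𝕜] [AddCommGroup E] [PartialOrder E] [IsOrderedAddMonoid E]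
    [Module 𝕜 E] [PosSMulMono 𝕜 E] [AddCommGroup F] [PartialOrder F] [IsOrderedAddMonoid F]
    [Module 𝕜 F] [PosSMulMono 𝕜 F] [Preorder Λ] [IsDirectedOrder Λ] [Nonempty Λ]
    (hE : ∀ x : E, ∃ y z : E, 0 ≤ y ∧ 0 ≤ z ∧ x = y - z)
    (hF : ∀ S : Set F, S.Nonempty → DirectedOn (· ≤ ·) S → BddAbove S → ∃ s, IsLUB S s)
    (T : Λ → E →ₗ[𝕜] F) (hmono : ∀ x : E, 0 ≤ x → Monotone fun l => T l x)
    (hbdd : ∀ x : E, 0 ≤ x → BddAbove (range fun l => T l x)) :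
    ∃ L : E →ₗ[𝕜] F, ∀ x : E, 0 ≤ x → IsLUB (range fun l => T l x) (L x) := by
  choose! g hg using fun x hx =>
    hF _ (range_nonempty _) (directedOn_range.2 (hmono x hx).directed_le) (hbdd x hx)
  have hadd (x y : E) (hx : 0 ≤ x) (hy : 0 ≤ y) : g (x + y) = g x + g y :=
    (hg _ (add_nonneg hx hy)).unique <| by
      simpa only [map_add] using (hmono x hx).isLUB_range_add (hmono y hy) (hg x hx) (hg y hy)
  have hsmul (c : 𝕜) (hc : 0 < c) (x : E) (hx : 0 ≤ x) : g (c • x) = c • g x :=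
    (hg _ (smul_nonneg hc.le hx)).unique <| by
      simpa only [map_smul, smul_set_range] using (hg x hx).smul_of_pos hc
  obtain ⟨L, hL⟩ := exists_linearMap_eqOn_nonneg hE g hadd hsmul
  exact ⟨L, fun x hx => hL x hx ▸ hg x hx⟩

theorem IsRegOp.of_isPosOp_sub {E F : Type*} [AddCommGroup E] [PartialOrder E] [Module ℝ E]
    [AddCommGroup F] [PartialOrder F] [IsOrderedAddMonoid F] [Module ℝ F] {S T : E →ₗ[ℝ] F}
    (hT : IsRegOp T) (h : IsPosOp (S - T)) : IsRegOp S := by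
  obtain ⟨P, Q, hP, hQ, rfl⟩ := hT
  exact ⟨S - (P - Q) + P, Q, fun x hx => add_nonneg (h x hx) (hP x hx), hQ, by abel⟩

theorem sup_of_increasing_net_of_regular_operators_general
    {E F : Type*} [AddCommGroup E] [PartialOrder E] [IsOrderedAddMonoid E] [Module ℝ E] [PosSMulStrictMono ℝ E]
    [AddCommGroup F] [PartialOrder F] [IsOrderedAddMonoid F] [Module ℝ F] [PosSMulStrictMono ℝ F]
    (hdirE : ∀ x : E, ∃ y z : E, 0 ≤ y ∧ 0 ≤ z ∧ x = y - z)
    (hmcF : ∀ S : Set F, S.Nonempty → DirectedOn (· ≤ ·) S → BddAbove S → ∃ s, IsLUB S s)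
    {Λ : Type*} [PartialOrder Λ] [Nonempty Λ]
    (hdirΛ : ∀ a b : Λ, ∃ c, a ≤ c ∧ b ≤ c)
    (T : Λ → E →ₗ[ℝ] F) (hreg : ∀ l, IsRegOp (T l))
    (hmono : ∀ l m : Λ, l ≤ m → ∀ x : E, 0 ≤ x → T l x ≤ T m x) :
    ((∃ S : E →ₗ[ℝ] F, IsRegOp S ∧ ∀ l, ∀ x : E, 0 ≤ x → T l x ≤ S x) ↔
      ∀ x : E, 0 ≤ x → BddAbove (Set.range fun l => T l x)) ∧
    ((∀ x : E, 0 ≤ x → BddAbove (Set.range fun l => T l x)) →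
      ∃ Tsup : E →ₗ[ℝ] F, IsRegOp Tsup ∧
        (∀ l, ∀ x : E, 0 ≤ x → T l x ≤ Tsup x) ∧
        (∀ S : E →ₗ[ℝ] F, IsRegOp S → (∀ l, ∀ x : E, 0 ≤ x → T l x ≤ S x) →
          ∀ x : E, 0 ≤ x → Tsup x ≤ S x) ∧
        (∀ x : E, 0 ≤ x → IsLUB (Set.range fun l => T l x) (Tsup x))) := by
  have : IsDirectedOrder Λ := ⟨hdirΛ⟩
  have hsup (hbdd : ∀ x : E, 0 ≤ x → BddAbove (range fun l => T l x)) :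
      ∃ L : E →ₗ[ℝ] F, IsRegOp L ∧ ∀ x : E, 0 ≤ x → IsLUB (range fun l => T l x) (L x) := by
    obtain ⟨L, hL⟩ := exists_linearMap_isLUB_of_monotone hdirE hmcF T
      (fun x hx l m hlm => hmono l m hlm x hx) hbdd
    obtain ⟨l₀⟩ := ‹Nonempty Λ›
    exact ⟨L, (hreg l₀).of_isPosOp_sub fun x hx => sub_nonneg.2 ((hL x hx).1 ⟨l₀, rfl⟩), hL⟩
  refine ⟨⟨?_, fun hbdd => ?_⟩, fun hbdd => ?_⟩
  · rintro ⟨S, -, hS⟩ x hx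
    exact ⟨S x, by rintro _ ⟨l, rfl⟩; exact hS l x hx⟩
  · obtain ⟨L, hL, hLUB⟩ := hsup hbdd
    exact ⟨L, hL, fun l x hx => (hLUB x hx).1 ⟨l, rfl⟩⟩
  · obtain ⟨L, hL, hLUB⟩ := hsup hbdd
    refine ⟨L, hL, fun l x hx => (hLUB x hx).1 ⟨l, rfl⟩,
      fun S _ hS x hx => (hLUB x hx).2 ?_, hLUB⟩
    rintro _ ⟨l, rfl⟩
    exact hS l x hx

/-- Let `E` be a directed partially ordered vector space, `F` a monotone complete
partially ordered vector space, and `(T_λ)` an increasing net of regular operators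
from `E` to `F`.  Then the net is bounded above in `L^r(E,F)` iff for every
`x ∈ E⁺` the net `(T_λ x)` is bounded above in `F`; in that case the net has a
supremum `T` in `L^r(E,F)`, given pointwise on `E⁺` by `T x = ⋁_λ T_λ x`. -/
theorem sup_of_increasing_net_of_regular_operators
    {E F : Type*} [AddCommGroup E] [PartialOrder E] [IsOrderedAddMonoid E] [Module ℝ E] [PosSMulStrictMono ℝ E] [PosSMulReflectLT ℝ E]
    [AddCommGroup F] [PartialOrder F] [IsOrderedAddMonoid F] [Module ℝ F] [PosSMulStrictMono ℝ F] [PosSMulReflectLT ℝ F]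
    (hdirE : ∀ x : E, ∃ y z : E, 0 ≤ y ∧ 0 ≤ z ∧ x = y - z)
    (hmcF : ∀ S : Set F, S.Nonempty → DirectedOn (· ≤ ·) S → BddAbove S → ∃ s, IsLUB S s)
    {Λ : Type*} [PartialOrder Λ] [Nonempty Λ]
    (hdirΛ : ∀ a b : Λ, ∃ c, a ≤ c ∧ b ≤ c)
    (T : Λ → E →ₗ[ℝ] F) (hreg : ∀ l, IsRegOp (T l))
    (hmono : ∀ l m : Λ, l ≤ m → ∀ x : E, 0 ≤ x → T l x ≤ T m x) :
    ((∃ S : E →ₗ[ℝ] F, IsRegOp S ∧ ∀ l, ∀ x : E, 0 ≤ x → T l x ≤ S x) ↔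
      ∀ x : E, 0 ≤ x → BddAbove (Set.range fun l => T l x)) ∧
    ((∀ x : E, 0 ≤ x → BddAbove (Set.range fun l => T l x)) →
      ∃ Tsup : E →ₗ[ℝ] F, IsRegOp Tsup ∧
        (∀ l, ∀ x : E, 0 ≤ x → T l x ≤ Tsup x) ∧
        (∀ S : E →ₗ[ℝ] F, IsRegOp S → (∀ l, ∀ x : E, 0 ≤ x → T l x ≤ S x) →
          ∀ x : E, 0 ≤ x → Tsup x ≤ S x) ∧
        (∀ x : E, 0 ≤ x → IsLUB (Set.range fun l => T l x) (Tsup x))) :=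
  sup_of_increasing_net_of_regular_operators_general hdirE hmcF hdirΛ T hreg hmono
end

section
/- Let H be a complex Hilbert space and L a strongly closed complex linear subspace of B(H). Then the real vector space L_sa of self-adjoint elements of L, with the order inherited from B(H)_sa, is monotone complete: every increasing net in L_sa bounded above in L_sa converges in the strong operator topology to an element of L_sa which equals its supremum in L_sa. -/
/-!
For an increasing net `Tᵢ ≤ B` the quadratic forms `re ⟪Tᵢ x, x⟫` increase to a finite limit,
and for `i₀ ≤ i ≤ j` the positive operator `P = Tⱼ - Tᵢ` has `‖P‖ ≤ ‖B - T_{i₀}‖`, so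
`‖P x‖² ≤ ‖P‖ re ⟪P x, x⟫` makes `Tᵢ x` Cauchy. The pointwise limit is a bounded operator because
the net eventually lies in the norm-bounded order interval `[T_{i₀}, B]`. Positivity passes to
strong limits, which makes the limit the least upper bound of the net in `B(H)`, and strong
closedness puts it in `L`.
-/

open Filter Set Topology ContinuousLinearMap

section
variable {ι α : Type*} [Preorder ι] [IsDirected ι (· ≤ ·)] [Nonempty ι] [PseudoMetricSpace α]

theorem cauchy_map_atTop_of_dist_le {u : ι → α} (b : ι → ℝ) (hb : Tendsto b atTop (𝓝 0))
    (h : ∀ᶠ m in atTop, ∀ n, m ≤ n → dist (u m) (u n) ≤ b m) : Cauchy (map u atTop) := by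
  refine Metric.cauchy_iff.2 ⟨map_neBot, fun ε hε => ?_⟩
  obtain ⟨N, hN⟩ := eventually_atTop.1 ((hb.eventually (gt_mem_nhds (half_pos hε))).and h)
  refine ⟨u '' Ici N, image_mem_map (Ici_mem_atTop N), ?_⟩
  rintro _ ⟨p, hp, rfl⟩ _ ⟨q, hq, rfl⟩
  obtain ⟨n, hpn, hqn⟩ := directed_of (· ≤ ·) p q
  obtain ⟨hbp, hp⟩ := hN p hp
  obtain ⟨hbq, hq⟩ := hN q hq
  calc dist (u p) (u q) ≤ dist (u p) (u n) + dist (u q) (u n) := dist_triangle_right _ _ _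
    _ ≤ b p + b q := add_le_add (hp n hpn) (hq n hqn)
    _ < ε := by linarith
end

namespace CStarAlgebra
variable {A : Type*} [NonUnitalCStarAlgebra A] [PartialOrder A] [StarOrderedRing A]

lemma norm_sub_le_norm_sub_of_le {a b c : A} (hac : a ≤ c) (hcb : c ≤ b) :
    ‖c - a‖ ≤ ‖b - a‖ :=
  norm_le_norm_of_nonneg_of_le (sub_nonneg.2 hac) (sub_le_sub_right hcb a)

lemma isBounded_Icc (a b : A) : Bornology.IsBounded (Icc a b) :=
  (Metric.isBounded_closedBall (x := a) (r := ‖b - a‖)).subset fun _ hc => by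
    rw [Metric.mem_closedBall, dist_eq_norm]
    exact norm_sub_le_norm_sub_of_le hc.1 hc.2

end CStarAlgebra

namespace ContinuousLinearMap

section
variable {𝕜 E ι : Type*} [RCLike 𝕜] [NormedAddCommGroup E] [InnerProductSpace 𝕜 E]

theorem isPositive_of_tendsto {l : Filter ι} [l.NeBot] {A : ι → E →L[𝕜] E} {A' : E →L[𝕜] E}
    (h : ∀ x, Tendsto (fun i => A i x) l (𝓝 (A' x))) (hA : ∀ᶠ i in l, (A i).IsPositive) :
    A'.IsPositive := by
  refine ⟨fun x y => ?_, fun x => ?_⟩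
  · refine tendsto_nhds_unique ((h x).inner tendsto_const_nhds) ?_
    refine (tendsto_const_nhds.inner (h y)).congr' (hA.mono fun i hi => ?_)
    exact (hi.inner_left_eq_inner_right x y).symm
  · exact ge_of_tendsto (RCLike.continuous_re.continuousAt.tendsto.comp
      ((h x).inner tendsto_const_nhds)) (hA.mono fun i hi => hi.re_inner_nonneg_left x)

lemma re_inner_le_re_inner_of_le {A B : E →L[𝕜] E} (h : A ≤ B) (x : E) :
    RCLike.re (inner 𝕜 (A x) x) ≤ RCLike.re (inner 𝕜 (B x) x) := by
  have := ((le_def A B).1 h).re_inner_nonneg_left x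
  simpa [inner_sub_left] using this
end

variable {H : Type*} [NormedAddCommGroup H] [InnerProductSpace ℂ H] [CompleteSpace H]

theorem IsPositive.norm_apply_sq_le {P : H →L[ℂ] H} (hP : P.IsPositive) (x : H) :
    ‖P x‖ ^ 2 ≤ ‖P‖ * RCLike.re (inner ℂ (P x) x) := by
  set R := CFC.sqrt P
  have hR : R.IsPositive := (nonneg_iff_isPositive R).1 (CFC.sqrt_nonneg P)
  have hRR : R * R = P := CFC.sqrt_mul_sqrt_self P ((nonneg_iff_isPositive P).2 hP)
  have hnorm : ‖R‖ ^ 2 = ‖P‖ := by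
    rw [← hRR, hR.isSelfAdjoint.norm_mul_self]
  have hinner : ‖R x‖ ^ 2 = RCLike.re (inner ℂ (P x) x) := by
    rw [← hRR, mul_apply_eq_comp, hR.inner_left_eq_inner_right, inner_self_eq_norm_sq]
  calc ‖P x‖ ^ 2 = ‖R (R x)‖ ^ 2 := by rw [← mul_apply_eq_comp, hRR]
    _ ≤ (‖R‖ * ‖R x‖) ^ 2 := by gcongr; exact R.le_opNorm _
    _ = ‖P‖ * RCLike.re (inner ℂ (P x) x) := by rw [mul_pow, hnorm, hinner]

variable {ι : Type*} [Preorder ι] [IsDirected ι (· ≤ ·)] [Nonempty ι] {T : ι → H →L[ℂ] H}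

theorem cauchy_map_apply_of_monotone (hT : Monotone T) (hbdd : BddAbove (range T)) (x : H) :
    Cauchy (map (fun i => T i x) atTop) := by
  obtain ⟨B, hB⟩ := hbdd
  obtain ⟨i₀⟩ := ‹Nonempty ι›
  set v : ι → ℝ := fun i => RCLike.re (inner ℂ (T i x) x)
  have hv : Monotone v := fun i j hij => re_inner_le_re_inner_of_le (hT hij) x
  obtain ⟨a, hva⟩ : ∃ a, Tendsto v atTop (𝓝 a) :=
    ⟨_, tendsto_atTop_ciSup hv
      ⟨_, forall_mem_range.2 fun i => re_inner_le_re_inner_of_le (hB ⟨i, rfl⟩) x⟩⟩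
  set C := ‖B - T i₀‖
  refine cauchy_map_atTop_of_dist_le (fun i => √(C * (a - v i))) ?_ ?_
  · simpa using ((hva.const_sub a).const_mul C).sqrt
  · filter_upwards [eventually_ge_atTop i₀] with m hm n hmn
    have hpos : (T n - T m).IsPositive := hT hmn
    have hnorm : ‖T n - T m‖ ≤ C :=
      (CStarAlgebra.norm_sub_le_norm_sub_of_le (hT hmn) (hB ⟨n, rfl⟩)).trans
        (CStarAlgebra.norm_le_norm_of_nonneg_of_le (sub_nonneg.2 (hB ⟨m, rfl⟩))
          (sub_le_sub_left (hT hm) B))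
    rw [dist_comm, dist_eq_norm, ← sub_apply]
    refine Real.le_sqrt_of_sq_le ((hpos.norm_apply_sq_le x).trans ?_)
    have : RCLike.re (inner ℂ ((T n - T m) x) x) = v n - v m := by simp [v]
    rw [this]
    gcongr
    · exact sub_nonneg.2 (hv hmn)
    · exact hv.ge_of_tendsto hva n

theorem exists_isLUB_tendsto_apply_of_monotone (hT : Monotone T) (hbdd : BddAbove (range T)) :
    ∃ S, IsLUB (range T) S ∧ ∀ x, Tendsto (fun i => T i x) atTop (𝓝 (S x)) := by
  choose g hg using fun x => CompleteSpace.complete (cauchy_map_apply_of_monotone hT hbdd x)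
  replace hg : ∀ x, Tendsto (fun i => T i x) atTop (𝓝 (g x)) := hg
  obtain ⟨B, hB⟩ := hbdd
  obtain ⟨i₀⟩ := ‹Nonempty ι›
  have hg_mem : g ∈ closure (((↑) : (H →L[ℂ] H) → H → H) '' Icc (T i₀) B) :=
    mem_closure_of_tendsto (tendsto_pi_nhds.2 hg) <| (eventually_ge_atTop i₀).mono
      fun i hi => mem_image_of_mem _ ⟨hT hi, hB ⟨i, rfl⟩⟩
  set S := ofMemClosureImageCoeBounded g (CStarAlgebra.isBounded_Icc (T i₀) B) hg_mem
  refine ⟨S, ⟨forall_mem_range.2 fun i => ?_, fun U hU => ?_⟩, hg⟩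
  · exact isPositive_of_tendsto (fun x => (hg x).sub_const (T i x))
      ((eventually_ge_atTop i).mono fun j hj => hT hj)
  · exact isPositive_of_tendsto (fun x => (hg x).const_sub (U x))
      (Eventually.of_forall fun j => hU ⟨j, rfl⟩)

end ContinuousLinearMap

theorem strongly_closed_subspace_sa_monotone_complete_general
    {H : Type} [NormedAddCommGroup H] [InnerProductSpace ℂ H] [CompleteSpace H]
    (L : Submodule ℂ (H →L[ℂ] H))
    (hL : ∀ (ι : Type) [Preorder ι], ∀ (T : ι → H →L[ℂ] H) (T' : H →L[ℂ] H),
      (∀ i, T i ∈ L) →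
      (∀ x : H, Filter.Tendsto (fun i => T i x) Filter.atTop (nhds (T' x))) → T' ∈ L)
    {Λ : Type} [PartialOrder Λ] [Nonempty Λ] (hdir : ∀ a b : Λ, ∃ c, a ≤ c ∧ b ≤ c)
    (T : Λ → H →L[ℂ] H) (hmem : ∀ l, T l ∈ L) (hsa : ∀ l, IsSelfAdjoint (T l))
    (hmono : ∀ l m : Λ, l ≤ m → (T m - T l).IsPositive)
    (B : H →L[ℂ] H)
    (hbd : ∀ l, (B - T l).IsPositive) :
    ∃ T' : H →L[ℂ] H, T' ∈ L ∧ IsSelfAdjoint T' ∧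
      (∀ x : H, Filter.Tendsto (fun l => T l x) Filter.atTop (nhds (T' x))) ∧
      (∀ l, (T' - T l).IsPositive) ∧
      (∀ S : H →L[ℂ] H, S ∈ L → IsSelfAdjoint S →
        (∀ l, (S - T l).IsPositive) → (S - T').IsPositive) := by
  have : IsDirected Λ (· ≤ ·) := ⟨hdir⟩
  obtain ⟨T', hlub, htend⟩ := ContinuousLinearMap.exists_isLUB_tendsto_apply_of_monotone
    (fun l m hlm => hmono l m hlm) ⟨B, forall_mem_range.2 hbd⟩
  have hle : ∀ l, T l ≤ T' := fun l => hlub.1 ⟨l, rfl⟩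
  obtain ⟨l⟩ := ‹Nonempty Λ›
  refine ⟨T', hL Λ T T' hmem htend, ?_, htend, hle,
    fun S _ _ hS => hlub.2 (forall_mem_range.2 hS)⟩
  rw [← sub_add_cancel T' (T l)]
  exact (sub_nonneg.2 (hle l)).isSelfAdjoint.add (hsa l)

/-- Let `H` be a complex Hilbert space and `L` a strongly closed complex linear
subspace of `B(H)`.  Then the self-adjoint part `L_sa` of `L` is monotone
complete: every increasing net in `L_sa` bounded above in `L_sa` converges in
the strong operator topology to an element of `L_sa`, which is its supremum in
`L_sa`. -/
theorem strongly_closed_subspace_sa_monotone_complete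
    {H : Type} [NormedAddCommGroup H] [InnerProductSpace ℂ H] [CompleteSpace H]
    (L : Submodule ℂ (H →L[ℂ] H))
    (hL : ∀ (ι : Type) [Preorder ι], ∀ (T : ι → H →L[ℂ] H) (T' : H →L[ℂ] H),
      (∀ i, T i ∈ L) →
      (∀ x : H, Filter.Tendsto (fun i => T i x) Filter.atTop (nhds (T' x))) → T' ∈ L)
    {Λ : Type} [PartialOrder Λ] [Nonempty Λ] (hdir : ∀ a b : Λ, ∃ c, a ≤ c ∧ b ≤ c)
    (T : Λ → H →L[ℂ] H) (hmem : ∀ l, T l ∈ L) (hsa : ∀ l, IsSelfAdjoint (T l))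
    (hmono : ∀ l m : Λ, l ≤ m → (T m - T l).IsPositive)
    (B : H →L[ℂ] H) (hB : B ∈ L) (hBsa : IsSelfAdjoint B)
    (hbd : ∀ l, (B - T l).IsPositive) :
    ∃ T' : H →L[ℂ] H, T' ∈ L ∧ IsSelfAdjoint T' ∧
      (∀ x : H, Filter.Tendsto (fun l => T l x) Filter.atTop (nhds (T' x))) ∧
      (∀ l, (T' - T l).IsPositive) ∧
      (∀ S : H →L[ℂ] H, S ∈ L → IsSelfAdjoint S →
        (∀ l, (S - T l).IsPositive) → (S - T').IsPositive) :=
  strongly_closed_subspace_sa_monotone_complete_general L hL hdir T hmem hsa hmono B hbd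
end

section
/- Let E be a normal partially ordered vector space, (x_λ) a decreasing net in E, and x ∈ E. Then x_λ ↓ x (i.e., x is the infimum of the net) if and only if ⟨x, x′⟩ = inf_λ ⟨x_λ, x′⟩ for every positive order continuous functional x′ on E. -/
/-!
Translating by `-x₀` reduces `x_λ ↓ x₀` to `x_λ - x₀ ↓ 0`, which order continuity carries to
`f (x_λ) - f (x₀) ↓ 0`. Conversely, normality says that the order of `E` is detected by the
positive order continuous functionals, so both halves of `IsGLB` can be checked after applying
every such functional.
-/

/-- A linear functional on a partially ordered vector space is a positive order
continuous functional if it is positive and maps decreasing nets with infimum `0`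
to nets of reals with infimum `0`. -/
def PosOrdCont {E : Type*} [AddCommGroup E] [PartialOrder E] [Module ℝ E]
    (f : E →ₗ[ℝ] ℝ) : Prop :=
  (∀ x : E, 0 ≤ x → 0 ≤ f x) ∧
  ∀ (ι : Type) [Preorder ι] [Nonempty ι], (∀ a b : ι, ∃ c, a ≤ c ∧ b ≤ c) →
    ∀ x : ι → E, (∀ i j, i ≤ j → x j ≤ x i) → IsGLB (Set.range x) 0 →
      IsGLB (Set.range fun i => f (x i)) 0

open Set

theorem isGLB_range_sub_const_iff {α ι : Type*} [AddCommGroup α] [PartialOrder α]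
    [IsOrderedAddMonoid α] {x : ι → α} {a : α} :
    IsGLB (range fun i => x i - a) 0 ↔ IsGLB (range x) a := by
  have h := (OrderIso.addRight (-a)).isGLB_image' (s := range x) (x := a)
  rw [← range_comp', OrderIso.addRight_apply, add_neg_cancel] at h
  simpa only [OrderIso.addRight_apply, ← sub_eq_add_neg] using h

namespace PosOrdCont

variable {E : Type*} [AddCommGroup E] [PartialOrder E] [IsOrderedAddMonoid E] [Module ℝ E]
  {f : E →ₗ[ℝ] ℝ}

theorem monotone (hf : PosOrdCont f) : Monotone f := fun a b hab => by
  simpa only [map_sub, sub_nonneg] using hf.1 (b - a) (sub_nonneg.2 hab)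

theorem isGLB_range_comp (hf : PosOrdCont f) {ι : Type} [Preorder ι] [Nonempty ι]
    (hdir : ∀ a b : ι, ∃ c, a ≤ c ∧ b ≤ c) (x : ι → E) (hdec : ∀ i j, i ≤ j → x j ≤ x i)
    {x₀ : E} (h : IsGLB (range x) x₀) : IsGLB (range fun i => f (x i)) (f x₀) := by
  rw [← isGLB_range_sub_const_iff] at h ⊢
  simpa only [map_sub] using hf.2 ι hdir _ (fun i j hij => sub_le_sub_right (hdec i j hij) x₀) h

end PosOrdCont

section Normal

variable {E : Type*} [AddCommGroup E] [PartialOrder E] [IsOrderedAddMonoid E] [Module ℝ E]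
  (hnormal : ∀ x : E, 0 ≤ x ↔ ∀ f : E →ₗ[ℝ] ℝ, PosOrdCont f → 0 ≤ f x)
include hnormal

theorem le_iff_forall_posOrdCont_of_normal {a b : E} :
    a ≤ b ↔ ∀ f : E →ₗ[ℝ] ℝ, PosOrdCont f → f a ≤ f b := by
  rw [← sub_nonneg, hnormal]
  simp only [map_sub, sub_nonneg]

theorem isGLB_of_forall_posOrdCont_of_normal {ι : Type*} {x : ι → E} {x₀ : E}
    (h : ∀ f : E →ₗ[ℝ] ℝ, PosOrdCont f → IsGLB (range fun i => f (x i)) (f x₀)) :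
    IsGLB (range x) x₀ := by
  refine ⟨forall_mem_range.2 fun i => ?_, fun b hb => ?_⟩
  · exact (le_iff_forall_posOrdCont_of_normal hnormal).2 fun f hf => (h f hf).1 ⟨i, rfl⟩
  · refine (le_iff_forall_posOrdCont_of_normal hnormal).2 fun f hf => (h f hf).2 ?_
    exact forall_mem_range.2 fun i => hf.monotone (hb ⟨i, rfl⟩)

end Normal

theorem isGLB_iff_posOrdCont_of_normal_general
    {E : Type*} [AddCommGroup E] [PartialOrder E] [IsOrderedAddMonoid E] [Module ℝ E]
    (hnormal : ∀ x : E, 0 ≤ x ↔ ∀ f : E →ₗ[ℝ] ℝ, PosOrdCont f → 0 ≤ f x)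
    {Λ : Type} [PartialOrder Λ] [Nonempty Λ] (hdir : ∀ a b : Λ, ∃ c, a ≤ c ∧ b ≤ c)
    (x : Λ → E) (hdec : ∀ l m : Λ, l ≤ m → x m ≤ x l) (x₀ : E) :
    IsGLB (Set.range x) x₀ ↔
      ∀ f : E →ₗ[ℝ] ℝ, PosOrdCont f → IsGLB (Set.range fun l => f (x l)) (f x₀) :=
  ⟨fun h _ hf => hf.isGLB_range_comp hdir x hdec h,
    isGLB_of_forall_posOrdCont_of_normal hnormal⟩

/-- In a normal partially ordered vector space, a decreasing net `(x_λ)` has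
infimum `x` iff `⟨x, x′⟩ = inf_λ ⟨x_λ, x′⟩` for every positive order continuous
functional `x′`. -/
theorem isGLB_iff_posOrdCont_of_normal
    {E : Type*} [AddCommGroup E] [PartialOrder E] [IsOrderedAddMonoid E] [Module ℝ E] [PosSMulStrictMono ℝ E] [PosSMulReflectLT ℝ E]
    (hnormal : ∀ x : E, 0 ≤ x ↔ ∀ f : E →ₗ[ℝ] ℝ, PosOrdCont f → 0 ≤ f x)
    {Λ : Type} [PartialOrder Λ] [Nonempty Λ] (hdir : ∀ a b : Λ, ∃ c, a ≤ c ∧ b ≤ c)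
    (x : Λ → E) (hdec : ∀ l m : Λ, l ≤ m → x m ≤ x l) (x₀ : E) :
    IsGLB (Set.range x) x₀ ↔
      ∀ f : E →ₗ[ℝ] ℝ, PosOrdCont f → IsGLB (Set.range fun l => f (x l)) (f x₀) :=
  isGLB_iff_posOrdCont_of_normal_general hnormal hdir x hdec x₀
end

section
/- Let H be a complex Hilbert space, L a strongly closed complex linear subspace of B(H), μ : Ω → (L_sa)⁺ a map on a measurable space (X, Ω) with μ(∅) = 0, and (Δ_n) a sequence of measurable sets with union in Ω. Then μ(⋃_n Δ_n) = ⋁_{N≥1} ∑_{n=1}^N μ(Δ_n) in L_sa (order σ-additivity) if and only if μ(⋃_n Δ_n)x = ∑_{n=1}^∞ μ(Δ_n)x in the norm of H for every x ∈ H (strong σ-additivity). -/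
/-!
The partial sums `S N = ∑_{n<N} μ(Δ n)` form an increasing sequence of positive operators
bounded by `A = μ(⋃ Δ n)`. By Vigier's theorem such a sequence converges strongly, and its
strong limit is its supremum among all self-adjoint operators on `H`. Strong closedness of `L`
puts this limit in `L`, so it is also the supremum in `L_sa`; hence order σ-additivity
(`A` is that supremum) and strong σ-additivity (`A` is that limit) say the same thing.

For the convergence: when `N ≤ M`, `B = S M - S N` satisfies `0 ≤ B ≤ A - S 0`, and `B² ≤ ‖B‖ B`
in any C⋆-algebra, whence `‖B x‖² ≤ ‖A - S 0‖ (⟪S M x, x⟫ - ⟪S N x, x⟫)`. The right side is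
controlled by an increasing bounded sequence of reals, so `S N x` is Cauchy; Banach–Steinhaus
makes the pointwise limit a bounded operator.
-/

open Filter Topology ContinuousLinearMap
open scoped InnerProductSpace ComplexInnerProductSpace

lemma cauchySeq_of_dist_sq_le_mul_sub {α : Type*} [PseudoMetricSpace α] {u : ℕ → α}
    {f : ℕ → ℝ} {C : ℝ} (hC : 0 ≤ C) (hf : Monotone f) (hbdd : BddAbove (Set.range f))
    (hu : ∀ N M, N ≤ M → dist (u N) (u M) ^ 2 ≤ C * (f M - f N)) : CauchySeq u := by
  refine Metric.cauchySeq_iff'.2 fun ε hε => ?_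
  obtain ⟨N, hN⟩ := Metric.cauchySeq_iff'.1 (tendsto_atTop_ciSup hf hbdd).cauchySeq
    (ε ^ 2 / (C + 1)) (by positivity)
  refine ⟨N, fun n hn => ?_⟩
  have hfn : f n - f N < ε ^ 2 / (C + 1) := by
    simpa only [Real.dist_eq, abs_of_nonneg (sub_nonneg.2 (hf hn))] using hN n hn
  rw [dist_comm]
  refine lt_of_pow_lt_pow_left₀ 2 hε.le ((hu N n hn).trans_lt ?_)
  calc C * (f n - f N) ≤ C * (ε ^ 2 / (C + 1)) := by gcongr
    _ < ε ^ 2 := by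
      rw [mul_div_assoc', div_lt_iff₀ (by positivity)]
      nlinarith [pow_pos hε 2]

lemma CStarAlgebra.mul_self_le_norm_smul {A : Type*} [NonUnitalCStarAlgebra A] [PartialOrder A]
    [StarOrderedRing A] {a : A} (ha : 0 ≤ a) : a * a ≤ ‖a‖ • a := by
  obtain ⟨b, hb, rfl⟩ : ∃ b : A, 0 ≤ b ∧ b * b = a :=
    ⟨CFC.sqrt a, CFC.sqrt_nonneg a, CFC.sqrt_mul_sqrt_self a⟩
  calc b * b * (b * b) = star b * (b * b) * b := by simp only [hb.star_eq, mul_assoc]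
    _ ≤ ‖b * b‖ • (star b * b) := CStarAlgebra.star_left_conjugate_le_norm_smul
    _ = ‖b * b‖ • (b * b) := by rw [hb.star_eq]

namespace ContinuousLinearMap

section RCLike

variable {𝕜 E : Type*} [RCLike 𝕜] [NormedAddCommGroup E] [InnerProductSpace 𝕜 E]

lemma re_inner_apply_le_of_le {A B : E →L[𝕜] E} (h : A ≤ B) (x : E) :
    RCLike.re ⟪A x, x⟫_𝕜 ≤ RCLike.re ⟪B x, x⟫_𝕜 := by
  have := ((le_def _ _).1 h).re_inner_nonneg_left x
  rwa [sub_apply, inner_sub_left, map_sub, sub_nonneg] at this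

lemma IsPositive.of_tendsto_apply {ι : Type*} {l : Filter ι} [l.NeBot]
    {P : ι → E →L[𝕜] E} {Q : E →L[𝕜] E} (hP : ∀ᶠ i in l, (P i).IsPositive)
    (hPQ : ∀ x, Tendsto (fun i => P i x) l (𝓝 (Q x))) : Q.IsPositive := by
  refine ⟨fun x y => ?_, fun x => ?_⟩
  · exact tendsto_nhds_unique ((hPQ x).inner tendsto_const_nhds)
      ((tendsto_const_nhds.inner (hPQ y)).congr' (hP.mono fun i hi => (hi.1 x y).symm))
  · exact ge_of_tendsto ((RCLike.continuous_re.tendsto _).comp ((hPQ x).inner tendsto_const_nhds))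
      (hP.mono fun i hi => hi.2 x)

lemma isLUB_range_of_tendsto_apply {S : ℕ → E →L[𝕜] E} {T : E →L[𝕜] E}
    (hS : Monotone S) (hST : ∀ x, Tendsto (fun N => S N x) atTop (𝓝 (T x))) :
    IsLUB (Set.range S) T := by
  refine ⟨Set.forall_mem_range.2 fun N => ?_, fun U hU => ?_⟩
  · refine IsPositive.of_tendsto_apply (P := fun M => S M - S N)
      ((eventually_ge_atTop N).mono fun M hM => hS hM) fun x => ?_
    simpa only [sub_apply] using (hST x).sub_const (S N x)
  · refine IsPositive.of_tendsto_apply (P := fun M => U - S M) (l := atTop)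
      (Eventually.of_forall fun M => hU ⟨M, rfl⟩) fun x => ?_
    simpa only [sub_apply] using (hST x).const_sub (U x)

end RCLike

section Complex

variable {H : Type*} [NormedAddCommGroup H] [InnerProductSpace ℂ H] [CompleteSpace H]

lemma norm_apply_sq_le_of_nonneg_of_le {B A : H →L[ℂ] H} (hB : 0 ≤ B) (hBA : B ≤ A) (x : H) :
    ‖B x‖ ^ 2 ≤ ‖A‖ * RCLike.re ⟪B x, x⟫ := by
  have hBpos := (nonneg_iff_isPositive B).1 hB
  have hsq := re_inner_apply_le_of_le (CStarAlgebra.mul_self_le_norm_smul hB) x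
  have hsmul : ⟪(‖B‖ • B) x, x⟫ = (‖B‖ : ℂ) * ⟪B x, x⟫ := by
    rw [smul_apply, RCLike.real_smul_eq_coe_smul (K := ℂ), inner_smul_left]
    simp
  calc ‖B x‖ ^ 2 = RCLike.re ⟪B (B x), x⟫ := by
        rw [hBpos.inner_left_eq_inner_right, inner_self_eq_norm_sq]
    _ ≤ ‖B‖ * RCLike.re ⟪B x, x⟫ := by
        rw [hsmul] at hsq
        simpa using hsq
    _ ≤ ‖A‖ * RCLike.re ⟪B x, x⟫ := by
        gcongr
        · exact hBpos.re_inner_nonneg_left x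
        · exact CStarAlgebra.norm_le_norm_of_nonneg_of_le hB hBA

lemma exists_tendsto_apply_of_monotone_of_le {S : ℕ → H →L[ℂ] H} {A : H →L[ℂ] H}
    (hS : Monotone S) (hSA : ∀ N, S N ≤ A) :
    ∃ T : H →L[ℂ] H, ∀ x, Tendsto (fun N => S N x) atTop (𝓝 (T x)) := by
  have hcauchy (x : H) : CauchySeq (fun N => S N x) := by
    refine cauchySeq_of_dist_sq_le_mul_sub (norm_nonneg (A - S 0))
      (f := fun N => RCLike.re ⟪S N x, x⟫) (fun N M h => re_inner_apply_le_of_le (hS h) x)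
      ⟨RCLike.re ⟪A x, x⟫, Set.forall_mem_range.2 fun N => re_inner_apply_le_of_le (hSA N) x⟩
      fun N M h => ?_
    have key := norm_apply_sq_le_of_nonneg_of_le (sub_nonneg.2 (hS h))
      (sub_le_sub (hSA M) (hS (Nat.zero_le N))) x
    rwa [sub_apply, inner_sub_left, map_sub, ← dist_eq_norm, dist_comm] at key
  choose l hl using fun x => cauchySeq_tendsto_of_complete (hcauchy x)
  exact ⟨continuousLinearMapOfTendsto S (tendsto_pi_nhds.2 hl), hl⟩

end Complex

end ContinuousLinearMap

theorem order_sigma_additive_iff_strong_sigma_additive_general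
    {H : Type} [NormedAddCommGroup H] [InnerProductSpace ℂ H] [CompleteSpace H]
    (L : Submodule ℂ (H →L[ℂ] H))
    (hL : ∀ (ι : Type) [Preorder ι], ∀ (T : ι → H →L[ℂ] H) (T' : H →L[ℂ] H),
      (∀ i, T i ∈ L) →
      (∀ x : H, Filter.Tendsto (fun i => T i x) Filter.atTop (nhds (T' x))) → T' ∈ L)
    {X : Type} [MeasurableSpace X]
    (μ : Set X → (H →L[ℂ] H))
    (hμ : ∀ s : Set X, MeasurableSet s → μ s ∈ L ∧ (μ s).IsPositive)
    (Δ : ℕ → Set X) (hΔ : ∀ n, MeasurableSet (Δ n)) :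
    (((∀ N : ℕ, (μ (⋃ n, Δ n) - ∑ n ∈ Finset.range N, μ (Δ n)).IsPositive) ∧
       ∀ S : H →L[ℂ] H, S ∈ L → IsSelfAdjoint S →
         (∀ N : ℕ, (S - ∑ n ∈ Finset.range N, μ (Δ n)).IsPositive) →
         (S - μ (⋃ n, Δ n)).IsPositive) ↔
      (∀ x : H, Filter.Tendsto (fun N => ∑ n ∈ Finset.range N, μ (Δ n) x)
        Filter.atTop (nhds (μ (⋃ n, Δ n) x)))) := by
  set A := μ (⋃ n, Δ n)
  set S : ℕ → H →L[ℂ] H := fun N => ∑ n ∈ Finset.range N, μ (Δ n) with hS_def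
  have hS : Monotone S := monotone_nat_of_le_succ fun N => by
    simpa [hS_def, Finset.sum_range_succ] using (nonneg_iff_isPositive _).2 (hμ _ (hΔ N)).2
  have hSL (N : ℕ) : S N ∈ L := Submodule.sum_mem L fun n _ => (hμ _ (hΔ n)).1
  simp only [← sum_apply]
  change ((∀ N, S N ≤ A) ∧ ∀ U ∈ L, IsSelfAdjoint U → (∀ N, S N ≤ U) → A ≤ U) ↔
    ∀ x, Tendsto (fun N => S N x) atTop (𝓝 (A x))
  constructor
  · rintro ⟨hSA, hA_least⟩
    obtain ⟨T, hT⟩ := exists_tendsto_apply_of_monotone_of_le hS hSA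
    have hT_lub := isLUB_range_of_tendsto_apply hS hT
    have hT_nonneg : 0 ≤ T := by simpa [S] using hT_lub.1 ⟨0, rfl⟩
    have hTA : T = A := le_antisymm (hT_lub.2 (Set.forall_mem_range.2 hSA))
      (hA_least T (hL ℕ S T hSL hT) ((nonneg_iff_isPositive T).1 hT_nonneg).isSelfAdjoint
        fun N => hT_lub.1 ⟨N, rfl⟩)
    rwa [← hTA]
  · intro hSA
    have hA_lub := isLUB_range_of_tendsto_apply hS hSA
    exact ⟨fun N => hA_lub.1 ⟨N, rfl⟩, fun U _ _ hU => hA_lub.2 (Set.forall_mem_range.2 hU)⟩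

/-- Let `H` be a complex Hilbert space, `L` a strongly closed complex linear
subspace of `B(H)`, `μ` a map on a measurable space with values in the positive
cone of `L_sa` and `μ ∅ = 0`, and `(Δ_n)` a sequence of measurable sets.  Then
`μ(⋃ Δ_n)` is the supremum in `L_sa` of the partial sums `∑_{n<N} μ(Δ_n)`
(order σ-additivity) iff `μ(⋃ Δ_n) x = ∑_n μ(Δ_n) x` in the norm of `H` for
every `x ∈ H` (strong σ-additivity). -/
theorem order_sigma_additive_iff_strong_sigma_additive
    {H : Type} [NormedAddCommGroup H] [InnerProductSpace ℂ H] [CompleteSpace H]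
    (L : Submodule ℂ (H →L[ℂ] H))
    (hL : ∀ (ι : Type) [Preorder ι], ∀ (T : ι → H →L[ℂ] H) (T' : H →L[ℂ] H),
      (∀ i, T i ∈ L) →
      (∀ x : H, Filter.Tendsto (fun i => T i x) Filter.atTop (nhds (T' x))) → T' ∈ L)
    {X : Type} [MeasurableSpace X]
    (μ : Set X → (H →L[ℂ] H))
    (hμ : ∀ s : Set X, MeasurableSet s → μ s ∈ L ∧ (μ s).IsPositive)
    (h0 : μ ∅ = 0)
    (Δ : ℕ → Set X) (hΔ : ∀ n, MeasurableSet (Δ n)) :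
    (((∀ N : ℕ, (μ (⋃ n, Δ n) - ∑ n ∈ Finset.range N, μ (Δ n)).IsPositive) ∧
       ∀ S : H →L[ℂ] H, S ∈ L → IsSelfAdjoint S →
         (∀ N : ℕ, (S - ∑ n ∈ Finset.range N, μ (Δ n)).IsPositive) →
         (S - μ (⋃ n, Δ n)).IsPositive) ↔
      (∀ x : H, Filter.Tendsto (fun N => ∑ n ∈ Finset.range N, μ (Δ n) x)
        Filter.atTop (nhds (μ (⋃ n, Δ n) x)))) :=
  order_sigma_additive_iff_strong_sigma_additive_general L hL μ hμ Δ hΔ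
end

section
/- Borel–Cantelli lemma, first part: Let (X, Ω, μ, E) be a measure space and (Δ_n) ⊆ Ω with Γ_k := ⋃_{n≥k} Δ_n ∈ Ω for all k and Γ := ⋂_k Γ_k ∈ Ω. If ⋁_{N≥1} ∑_{n=1}^N μ(Δ_n) is finite (lies in E), then μ(Γ) = 0. -/
/-!
With `S k = ∑ n < k, μ (Δ n)`, the tail `⋃ n ≥ k, Δ n` is the disjoint union of the disjointed
tail sets, so σ-additivity and monotonicity bound its measure by every upper bound of the tail
partial sums, in particular by `b - S k`. As `Γ` lies in every tail, `S k + μ Γ ≤ b` for all `k`,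
and since `b` is the least upper bound of the `S k`, this forces `μ Γ ≤ 0`.
-/

open Set MeasureTheory

namespace WithTop

variable {E : Type*} [AddCommGroup E] [PartialOrder E] [IsOrderedAddMonoid E]

theorem add_coe_le_coe_iff_le_coe_sub {x : WithTop E} {b c : E} :
    x + c ≤ b ↔ x ≤ ↑(b - c) := by
  induction x with
  | top => simp
  | coe x => norm_cast; exact le_sub_iff_add_le.symm

theorem le_zero_of_forall_add_le_of_isLUB {ι : Type*} [Nonempty ι] {S : ι → WithTop E} {b : E}
    {m : WithTop E} (hb : IsLUB (range S) b) (h : ∀ i, S i + m ≤ b) : m ≤ 0 := by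
  obtain ⟨i⟩ := ‹Nonempty ι›
  induction m with
  | top => simpa using h i
  | coe g =>
    have hS : ∀ i, S i ≤ ↑(b - g) := fun i => add_coe_le_coe_iff_le_coe_sub.mp (h i)
    have : (b : WithTop E) ≤ ↑(b - g) := hb.2 (forall_mem_range.2 hS)
    norm_cast at this ⊢
    exact (le_sub_self_iff b).mp this

end WithTop

structure IsOrderSigmaAdditiveMeasure {X M : Type*} [AddCommMonoid M] [PartialOrder M]
    (Ω : Set (Set X)) (μ : Set X → M) : Prop where
  nonneg : ∀ s ∈ Ω, 0 ≤ μ s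
  empty : μ ∅ = 0
  isLUB_iUnion : ∀ Δ : ℕ → Set X, (∀ n, Δ n ∈ Ω) → (∀ m n, m ≠ n → Disjoint (Δ m) (Δ n)) →
    (⋃ n, Δ n) ∈ Ω → IsLUB (range fun N => ∑ n ∈ Finset.range N, μ (Δ n)) (μ (⋃ n, Δ n))

namespace IsOrderSigmaAdditiveMeasure

variable {X M : Type*} [AddCommMonoid M] [PartialOrder M] [IsOrderedAddMonoid M]
  {Ω : Set (Set X)} {μ : Set X → M}

theorem union_eq (hμ : IsOrderSigmaAdditiveMeasure Ω μ) (hΩ : IsSetRing Ω) {s t : Set X}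
    (hs : s ∈ Ω) (ht : t ∈ Ω) (hst : Disjoint s t) : μ (s ∪ t) = μ s + μ t := by
  let f : ℕ → Set X := fun | 0 => s | 1 => t | _ + 2 => ∅
  have hf : ∀ n, f n ∈ Ω := by rintro (_ | _ | n) <;> simp [f, hs, ht, hΩ.empty_mem]
  have hdisj : ∀ m n, m ≠ n → Disjoint (f m) (f n) := by
    rintro (_ | _ | m) (_ | _ | n) hmn <;> simp_all [f, hst.symm]
  have hunion : ⋃ n, f n = s ∪ t := by
    rw [← union_iUnion_nat_succ, ← union_iUnion_nat_succ]
    simp [f]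
  have hsum : ∀ N, ∑ n ∈ Finset.range (N + 2), μ (f n) = μ s + μ t := by
    intro N
    simp [Finset.sum_range_succ', f, hμ.empty, add_comm]
  have hlub := hμ.isLUB_iUnion f hf hdisj (hunion ▸ hΩ.union_mem hs ht)
  rw [hunion] at hlub
  refine hlub.unique ⟨?_, fun c hc => hc ⟨2, hsum 0⟩⟩
  rintro _ ⟨_ | _ | N, rfl⟩
  · simpa using add_nonneg (hμ.nonneg s hs) (hμ.nonneg t ht)
  · simpa [f] using le_add_of_nonneg_right (hμ.nonneg t ht)
  · exact (hsum N).le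

theorem mono (hμ : IsOrderSigmaAdditiveMeasure Ω μ) (hΩ : IsSetRing Ω) {s t : Set X}
    (hs : s ∈ Ω) (ht : t ∈ Ω) (hst : s ⊆ t) : μ s ≤ μ t := by
  have hts : t \ s ∈ Ω := hΩ.sdiff_mem ht hs
  calc μ s ≤ μ s + μ (t \ s) := le_add_of_nonneg_right (hμ.nonneg _ hts)
    _ = μ t := by rw [← hμ.union_eq hΩ hs hts disjoint_sdiff_right, union_sdiff_cancel hst]

theorem le_of_forall_sum_le (hμ : IsOrderSigmaAdditiveMeasure Ω μ) (hΩ : IsSetRing Ω)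
    {Δ : ℕ → Set X} (hΔ : ∀ n, Δ n ∈ Ω) (hU : (⋃ n, Δ n) ∈ Ω) {c : M}
    (hc : ∀ N, ∑ n ∈ Finset.range N, μ (Δ n) ≤ c) : μ (⋃ n, Δ n) ≤ c := by
  have hD : ∀ n, disjointed Δ n ∈ Ω := hΩ.disjointed_mem hΔ
  have hlub := hμ.isLUB_iUnion (disjointed Δ) hD (fun _ _ h => disjoint_disjointed Δ h)
    (by rwa [iUnion_disjointed])
  rw [iUnion_disjointed] at hlub
  refine hlub.2 (forall_mem_range.2 fun N => (Finset.sum_le_sum fun n _ => ?_).trans (hc N))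
  exact hμ.mono hΩ (hD n) (hΔ n) (disjointed_subset Δ n)

theorem sum_range_add_tail_le {E : Type*} [AddCommGroup E] [PartialOrder E]
    [IsOrderedAddMonoid E] {μ : Set X → WithTop E} (hμ : IsOrderSigmaAdditiveMeasure Ω μ)
    (hΩ : IsSetRing Ω) {Δ : ℕ → Set X} (hΔ : ∀ n, Δ n ∈ Ω) {k : ℕ}
    (hΓk : (⋃ n, ⋃ (_ : k ≤ n), Δ n) ∈ Ω) {b : E}
    (hb : ∀ N, ∑ n ∈ Finset.range N, μ (Δ n) ≤ b) :
    ∑ n ∈ Finset.range k, μ (Δ n) + μ (⋃ n, ⋃ (_ : k ≤ n), Δ n) ≤ b := by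
  obtain ⟨s, hs⟩ := WithTop.ne_top_iff_exists.mp (ne_top_of_le_ne_top WithTop.coe_ne_top (hb k))
  have htail : ⋃ n, ⋃ (_ : k ≤ n), Δ n = ⋃ n, Δ (k + n) := by
    simp_rw [add_comm k]; exact iUnion_ge_eq_iUnion_nat_add Δ k
  rw [← hs, add_comm, WithTop.add_coe_le_coe_iff_le_coe_sub, htail]
  refine hμ.le_of_forall_sum_le hΩ (fun n => hΔ _) (htail ▸ hΓk) fun N => ?_
  rw [← WithTop.add_coe_le_coe_iff_le_coe_sub, hs, add_comm, ← Finset.sum_range_add]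
  exact hb _

end IsOrderSigmaAdditiveMeasure

theorem borel_cantelli_first_general
    {X : Type*} {E : Type*} [AddCommGroup E] [PartialOrder E] [IsOrderedAddMonoid E]
    (Ω : Set (Set X)) (hΩempty : ∅ ∈ Ω) (hΩcompl : ∀ s ∈ Ω, sᶜ ∈ Ω)
    (hΩunion : ∀ s ∈ Ω, ∀ t ∈ Ω, s ∪ t ∈ Ω)
    (μ : Set X → WithTop E) (hpos : ∀ s ∈ Ω, 0 ≤ μ s) (h0 : μ ∅ = 0)
    (hadd : ∀ Δ : ℕ → Set X, (∀ n, Δ n ∈ Ω) → (∀ m n, m ≠ n → Disjoint (Δ m) (Δ n)) →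
      (⋃ n, Δ n) ∈ Ω →
      IsLUB (Set.range fun N => ∑ n ∈ Finset.range N, μ (Δ n)) (μ (⋃ n, Δ n)))
    (Δ : ℕ → Set X) (hΔ : ∀ n, Δ n ∈ Ω)
    (hΓk : ∀ k : ℕ, (⋃ n, ⋃ (_ : k ≤ n), Δ n) ∈ Ω)
    (hΓ : (⋂ k : ℕ, ⋃ n, ⋃ (_ : k ≤ n), Δ n) ∈ Ω)
    (hfin : ∃ b : E,
      IsLUB (Set.range fun N => ∑ n ∈ Finset.range N, μ (Δ n)) (↑b : WithTop E)) :
    μ (⋂ k : ℕ, ⋃ n, ⋃ (_ : k ≤ n), Δ n) = 0 := by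
  obtain ⟨b, hb⟩ := hfin
  have hΩ : IsSetRing Ω := (IsSetAlgebra.mk hΩempty (fun s hs => hΩcompl s hs)
    (fun s t hs ht => hΩunion s hs t ht)).isSetRing
  have hμ : IsOrderSigmaAdditiveMeasure Ω μ := ⟨hpos, h0, hadd⟩
  refine le_antisymm (WithTop.le_zero_of_forall_add_le_of_isLUB hb fun k => ?_) (hpos _ hΓ)
  calc ∑ n ∈ Finset.range k, μ (Δ n) + μ (⋂ k : ℕ, ⋃ n, ⋃ (_ : k ≤ n), Δ n)
      ≤ ∑ n ∈ Finset.range k, μ (Δ n) + μ (⋃ n, ⋃ (_ : k ≤ n), Δ n) :=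
        add_le_add_right (hμ.mono hΩ hΓ (hΓk k) (iInter_subset _ k)) _
    _ ≤ b := hμ.sum_range_add_tail_le hΩ hΔ (hΓk k) fun N => hb.1 ⟨N, rfl⟩

/-- Borel–Cantelli lemma, first part: if the supremum of the partial sums
`∑_{n<N} μ(Δ_n)` exists in `E̅` and is finite, then the limsup set
`Γ = ⋂_k ⋃_{n≥k} Δ_n` has measure zero. -/
theorem borel_cantelli_first
    {X : Type*} {E : Type*} [AddCommGroup E] [PartialOrder E] [IsOrderedAddMonoid E] [Module ℝ E]
    [PosSMulStrictMono ℝ E] [PosSMulReflectLT ℝ E]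
    (hσ : ∀ a : ℕ → E, Monotone a → BddAbove (Set.range a) → ∃ s, IsLUB (Set.range a) s)
    (Ω : Set (Set X)) (hΩempty : ∅ ∈ Ω) (hΩcompl : ∀ s ∈ Ω, sᶜ ∈ Ω)
    (hΩunion : ∀ s ∈ Ω, ∀ t ∈ Ω, s ∪ t ∈ Ω)
    (μ : Set X → WithTop E) (hpos : ∀ s ∈ Ω, 0 ≤ μ s) (h0 : μ ∅ = 0)
    (hadd : ∀ Δ : ℕ → Set X, (∀ n, Δ n ∈ Ω) → (∀ m n, m ≠ n → Disjoint (Δ m) (Δ n)) →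
      (⋃ n, Δ n) ∈ Ω →
      IsLUB (Set.range fun N => ∑ n ∈ Finset.range N, μ (Δ n)) (μ (⋃ n, Δ n)))
    (Δ : ℕ → Set X) (hΔ : ∀ n, Δ n ∈ Ω)
    (hΓk : ∀ k : ℕ, (⋃ n, ⋃ (_ : k ≤ n), Δ n) ∈ Ω)
    (hΓ : (⋂ k : ℕ, ⋃ n, ⋃ (_ : k ≤ n), Δ n) ∈ Ω)
    (hfin : ∃ b : E,
      IsLUB (Set.range fun N => ∑ n ∈ Finset.range N, μ (Δ n)) (↑b : WithTop E)) :
    μ (⋂ k : ℕ, ⋃ n, ⋃ (_ : k ≤ n), Δ n) = 0 :=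
  borel_cantelli_first_general Ω hΩempty hΩcompl hΩunion μ hpos h0 hadd Δ hΔ hΓk hΓ hfin
end

section
/- Borel–Cantelli lemma, second part: Let (X, Ω, μ, E) be a measure space, (Δ_n) ⊆ Ω with Γ_k := ⋃_{n≥k} Δ_n ∈ Ω for all k and Γ := ⋂_k Γ_k ∈ Ω. If μ((⋃_n Δ_n) \ Γ) is finite, then μ(Γ) ≥ x in E̅ for every x ∈ E satisfying μ(Δ_n) ≥ x for all n. -/
/-!
The tails `Γₖ = ⋃_{n ≥ k} Δₙ` decrease to `Γ`, and `x ≤ μ Δₖ ≤ μ Γₖ` for every `k`. By continuity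
from below, the finite value `e = μ (Γ₀ \ Γ)` is the supremum of the `μ (Γ₀ \ Γₖ)`, so the
remainders `μ (Γₖ \ Γ) = e - μ (Γ₀ \ Γₖ)` decrease to `0` in the order sense. Passing to the limit
in `x ≤ μ Γₖ = μ Γ + μ (Γₖ \ Γ)` gives `x ≤ μ Γ`.
-/

open Set Function MeasureTheory

theorem WithTop.coe_le_of_isLUB_of_add_eq {E : Type*} [AddCommGroup E] [PartialOrder E]
    [IsOrderedAddMonoid E] {a b : ℕ → WithTop E} {g : WithTop E} {e x : E}
    (ha : IsLUB (range a) e) (hab : ∀ k, a k + b k = e) (hx : ∀ k, (x : WithTop E) ≤ g + b k) :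
    (x : WithTop E) ≤ g := by
  induction g with
  | top => exact le_top
  | coe g =>
    have hbound : ∀ k, a k ≤ ↑(e + g - x) := by
      intro k
      obtain ⟨α, β, hα, hβ, hαβ⟩ := WithTop.add_eq_coe.1 (hab k)
      have hxk : x ≤ g + β := by exact_mod_cast hβ ▸ hx k
      rw [← hα, WithTop.coe_le_coe, le_sub_iff_add_le]
      calc α + x ≤ α + (g + β) := add_le_add_right hxk α
        _ = e + g := by rw [← hαβ]; abel
    have he : e ≤ e + g - x := WithTop.coe_le_coe.1 (ha.2 (forall_mem_range.2 hbound))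
    rw [le_sub_iff_add_le, add_le_add_iff_left] at he
    exact WithTop.coe_le_coe.2 he

structure IsOrderMeasure {X E : Type*} [AddCommMonoid E] [PartialOrder E]
    (Ω : Set (Set X)) (μ : Set X → WithTop E) : Prop where
  nonneg : ∀ s ∈ Ω, 0 ≤ μ s
  empty : μ ∅ = 0
  isLUB_sum : ∀ Δ : ℕ → Set X, (∀ n, Δ n ∈ Ω) → Pairwise (Disjoint on Δ) → (⋃ n, Δ n) ∈ Ω →
    IsLUB (range fun N => ∑ n ∈ Finset.range N, μ (Δ n)) (μ (⋃ n, Δ n))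

namespace IsOrderMeasure

variable {X E : Type*} {Ω : Set (Set X)}

section OrderedMonoid

variable [AddCommMonoid E] [PartialOrder E] [IsOrderedAddMonoid E] {μ : Set X → WithTop E}

theorem union_eq_add (hμ : IsOrderMeasure Ω μ) (hΩ : IsSetAlgebra Ω) {s t : Set X}
    (hs : s ∈ Ω) (ht : t ∈ Ω) (hst : Disjoint s t) : μ (s ∪ t) = μ s + μ t := by
  let f : ℕ → Set X := fun | 0 => s | 1 => t | _ => ∅
  have hf : (⋃ n, f n) = s ∪ t := by
    ext x
    refine ⟨fun hx => ?_, fun hx => ?_⟩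
    · obtain ⟨_ | _ | n, hn⟩ := mem_iUnion.1 hx <;> simp_all [f]
    · rcases hx with hx | hx
      exacts [mem_iUnion.2 ⟨0, hx⟩, mem_iUnion.2 ⟨1, hx⟩]
  have hfΩ : ∀ n, f n ∈ Ω := by
    rintro (_ | _ | n) <;> simp [f, hs, ht, hΩ.empty_mem]
  have hfd : Pairwise (Disjoint on f) := by
    rintro (_ | _ | m) (_ | _ | n) hmn <;> simp_all [f, Function.onFun, hst.symm]
  have htwo : ∑ n ∈ Finset.range 2, μ (f n) = μ s + μ t := by simp [Finset.sum_range_succ, f]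
  have hsum : ∀ N, ∑ n ∈ Finset.range N, μ (f n) ≤ μ s + μ t := fun N =>
    calc ∑ n ∈ Finset.range N, μ (f n)
        ≤ ∑ n ∈ Finset.range (2 + N), μ (f n) :=
          Finset.sum_le_sum_of_subset_of_nonneg (Finset.range_subset_range.2 (by omega))
            fun n _ _ => hμ.nonneg _ (hfΩ n)
      _ = μ s + μ t := by
          rw [Finset.sum_range_add, htwo, Finset.sum_eq_zero fun n _ => ?_, add_zero]
          rw [add_comm]
          exact hμ.empty
  have hmax : IsGreatest (range fun N => ∑ n ∈ Finset.range N, μ (f n)) (μ s + μ t) :=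
    ⟨⟨2, htwo⟩, forall_mem_range.2 hsum⟩
  rw [← hf]
  exact (hμ.isLUB_sum f hfΩ hfd (hf ▸ hΩ.union_mem hs ht)).unique hmax.isLUB

theorem eq_add_sdiff_of_subset (hμ : IsOrderMeasure Ω μ) (hΩ : IsSetAlgebra Ω) {s t : Set X}
    (hs : s ∈ Ω) (ht : t ∈ Ω) (hst : s ⊆ t) : μ t = μ s + μ (t \ s) := by
  rw [← hμ.union_eq_add hΩ hs (hΩ.sdiff_mem ht hs) disjoint_sdiff_right, union_sdiff_cancel hst]

theorem mono (hμ : IsOrderMeasure Ω μ) (hΩ : IsSetAlgebra Ω) {s t : Set X}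
    (hs : s ∈ Ω) (ht : t ∈ Ω) (hst : s ⊆ t) : μ s ≤ μ t := by
  rw [hμ.eq_add_sdiff_of_subset hΩ hs ht hst]
  exact le_add_of_nonneg_right (hμ.nonneg _ (hΩ.sdiff_mem ht hs))

theorem isLUB_measure_iUnion_of_monotone (hμ : IsOrderMeasure Ω μ) (hΩ : IsSetAlgebra Ω)
    {A : ℕ → Set X} (hA : Monotone A) (hAΩ : ∀ n, A n ∈ Ω) (hU : (⋃ n, A n) ∈ Ω) :
    IsLUB (range fun n => μ (A n)) (μ (⋃ n, A n)) := by
  have hD : ∀ n, disjointed A (n + 1) = A (n + 1) \ A n := fun n =>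
    hA.disjointed_succ (not_isMax n)
  have hDΩ : ∀ n, disjointed A n ∈ Ω := by
    rintro (_ | n)
    · simpa using hAΩ 0
    · rw [hD]
      exact hΩ.sdiff_mem (hAΩ _) (hAΩ n)
  have hpartial : ∀ N, ∑ n ∈ Finset.range (N + 1), μ (disjointed A n) = μ (A N) := by
    intro N
    induction N with
    | zero => simp
    | succ N ih =>
      rw [Finset.sum_range_succ, ih, hD,
        ← hμ.eq_add_sdiff_of_subset hΩ (hAΩ N) (hAΩ (N + 1)) (hA N.le_succ)]
  have hlub := hμ.isLUB_sum _ hDΩ (disjoint_disjointed A) (by rwa [iUnion_disjointed])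
  rw [iUnion_disjointed] at hlub
  refine (isLUB_congr ?_).1 hlub
  ext b
  simp only [mem_upperBounds, forall_mem_range]
  refine ⟨fun h N => hpartial N ▸ h (N + 1), fun h N => ?_⟩
  cases N with
  | zero => simpa [hμ.empty] using (hμ.nonneg _ (hAΩ 0)).trans (h 0)
  | succ N => exact (hpartial N).symm ▸ h N

end OrderedMonoid

theorem le_measure_iInter_of_antitone [AddCommGroup E] [PartialOrder E]
    [IsOrderedAddMonoid E] {μ : Set X → WithTop E} (hμ : IsOrderMeasure Ω μ) (hΩ : IsSetAlgebra Ω)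
    {G : ℕ → Set X} (hG : Antitone G) (hGΩ : ∀ k, G k ∈ Ω) (hIΩ : (⋂ k, G k) ∈ Ω) {e : E}
    (he : μ (G 0 \ ⋂ k, G k) = e) {x : E} (hx : ∀ k, (x : WithTop E) ≤ μ (G k)) :
    (x : WithTop E) ≤ μ (⋂ k, G k) := by
  have hlub := hμ.isLUB_measure_iUnion_of_monotone hΩ
    (fun k l hkl => sdiff_subset_sdiff_right (hG hkl)) (fun k => hΩ.sdiff_mem (hGΩ 0) (hGΩ k))
    (by rw [← sdiff_iInter]; exact hΩ.sdiff_mem (hGΩ 0) hIΩ)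
  rw [← sdiff_iInter, he] at hlub
  refine WithTop.coe_le_of_isLUB_of_add_eq (b := fun k => μ (G k \ ⋂ k, G k)) hlub
    (fun k => ?_) fun k => (hx k).trans_eq ?_
  · rw [← he, ← sdiff_union_sdiff_cancel (hG k.zero_le) (iInter_subset G k)]
    exact (hμ.union_eq_add hΩ (hΩ.sdiff_mem (hGΩ 0) (hGΩ k)) (hΩ.sdiff_mem (hGΩ k) hIΩ)
      (disjoint_sdiff_left.mono_right sdiff_subset)).symm
  · exact hμ.eq_add_sdiff_of_subset hΩ hIΩ (hGΩ k) (iInter_subset G k)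

end IsOrderMeasure

theorem borel_cantelli_second_general
    {X : Type*} {E : Type*} [AddCommGroup E] [PartialOrder E] [IsOrderedAddMonoid E]
    (Ω : Set (Set X)) (hΩempty : ∅ ∈ Ω) (hΩcompl : ∀ s ∈ Ω, sᶜ ∈ Ω)
    (hΩunion : ∀ s ∈ Ω, ∀ t ∈ Ω, s ∪ t ∈ Ω)
    (μ : Set X → WithTop E) (hpos : ∀ s ∈ Ω, 0 ≤ μ s) (h0 : μ ∅ = 0)
    (hadd : ∀ Δ : ℕ → Set X, (∀ n, Δ n ∈ Ω) → (∀ m n, m ≠ n → Disjoint (Δ m) (Δ n)) →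
      (⋃ n, Δ n) ∈ Ω →
      IsLUB (Set.range fun N => ∑ n ∈ Finset.range N, μ (Δ n)) (μ (⋃ n, Δ n)))
    (Δ : ℕ → Set X) (hΔ : ∀ n, Δ n ∈ Ω)
    (hΓk : ∀ k : ℕ, (⋃ n, ⋃ (_ : k ≤ n), Δ n) ∈ Ω)
    (hΓ : (⋂ k : ℕ, ⋃ n, ⋃ (_ : k ≤ n), Δ n) ∈ Ω)
    (hfin : ∃ e : E,
      μ ((⋃ n, Δ n) \ (⋂ k : ℕ, ⋃ n, ⋃ (_ : k ≤ n), Δ n)) = (↑e : WithTop E)) :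
    ∀ x : E, (∀ n, (↑x : WithTop E) ≤ μ (Δ n)) →
      (↑x : WithTop E) ≤ μ (⋂ k : ℕ, ⋃ n, ⋃ (_ : k ≤ n), Δ n) := by
  intro x hx
  have hΩ : IsSetAlgebra Ω := ⟨hΩempty, hΩcompl, fun s t hs ht => hΩunion s hs t ht⟩
  have hμ : IsOrderMeasure Ω μ := ⟨hpos, h0, fun Δ hΔ hd => hadd Δ hΔ fun _ _ h => hd h⟩
  obtain ⟨e, he⟩ := hfin
  have hantitone : Antitone fun k => ⋃ n, ⋃ (_ : k ≤ n), Δ n := fun k l hkl =>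
    iUnion₂_mono' fun n hn => ⟨n, hkl.trans hn, subset_rfl⟩
  have hxΓk : ∀ k, (x : WithTop E) ≤ μ (⋃ n, ⋃ (_ : k ≤ n), Δ n) := fun k =>
    (hx k).trans (hμ.mono hΩ (hΔ k) (hΓk k) (subset_iUnion₂_of_subset k le_rfl subset_rfl))
  exact hμ.le_measure_iInter_of_antitone hΩ hantitone hΓk hΓ (by simpa using he) hxΓk

/-- Borel–Cantelli lemma, second part: if `μ((⋃ Δ_n) \ Γ)` is finite, where `Γ`
is the limsup set of the `Δ_n`, then `μ(Γ) ≥ x` in `E̅` for every `x ∈ E` with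
`μ(Δ_n) ≥ x` for all `n`. -/
theorem borel_cantelli_second
    {X : Type*} {E : Type*} [AddCommGroup E] [PartialOrder E] [IsOrderedAddMonoid E] [Module ℝ E]
      [PosSMulStrictMono ℝ E] [PosSMulReflectLT ℝ E]
    (hσ : ∀ a : ℕ → E, Monotone a → BddAbove (Set.range a) → ∃ s, IsLUB (Set.range a) s)
    (Ω : Set (Set X)) (hΩempty : ∅ ∈ Ω) (hΩcompl : ∀ s ∈ Ω, sᶜ ∈ Ω)
    (hΩunion : ∀ s ∈ Ω, ∀ t ∈ Ω, s ∪ t ∈ Ω)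
    (μ : Set X → WithTop E) (hpos : ∀ s ∈ Ω, 0 ≤ μ s) (h0 : μ ∅ = 0)
    (hadd : ∀ Δ : ℕ → Set X, (∀ n, Δ n ∈ Ω) → (∀ m n, m ≠ n → Disjoint (Δ m) (Δ n)) →
      (⋃ n, Δ n) ∈ Ω →
      IsLUB (Set.range fun N => ∑ n ∈ Finset.range N, μ (Δ n)) (μ (⋃ n, Δ n)))
    (Δ : ℕ → Set X) (hΔ : ∀ n, Δ n ∈ Ω)
    (hΓk : ∀ k : ℕ, (⋃ n, ⋃ (_ : k ≤ n), Δ n) ∈ Ω)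
    (hΓ : (⋂ k : ℕ, ⋃ n, ⋃ (_ : k ≤ n), Δ n) ∈ Ω)
    (hfin : ∃ e : E,
      μ ((⋃ n, Δ n) \ (⋂ k : ℕ, ⋃ n, ⋃ (_ : k ≤ n), Δ n)) = (↑e : WithTop E)) :
    ∀ x : E, (∀ n, (↑x : WithTop E) ≤ μ (Δ n)) →
      (↑x : WithTop E) ≤ μ (⋂ k : ℕ, ⋃ n, ⋃ (_ : k ≤ n), Δ n) :=
  borel_cantelli_second_general Ω hΩempty hΩcompl hΩunion μ hpos h0 hadd Δ hΔ hΓk hΓ hfin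
end

section
/- Let X be a set, E a σ-monotone complete partially ordered vector space, and μ* : P(X) → E̅⁺ an E̅⁺-valued outer measure. Then the collection M of μ*-measurable subsets of X (Carathéodory measurable sets) is a σ-algebra, and the restriction of μ* to M is an order-σ-additive E̅⁺-valued measure. -/
/-!
The Carathéodory argument goes through for values in `WithTop E` once series are read as
suprema of partial sums. If the `B n` are pairwise disjoint and measurable with union `U`,
finite additivity on the partial unions gives
`∑ n < N, μ*(Γ ∩ B n) + μ*(Γ ∩ Uᶜ) ≤ μ*(Γ)` for every `N`. σ-monotone completeness of `E`
supplies the supremum `c` of these partial sums in `WithTop E`, and σ-subadditivity gives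
`μ*(Γ ∩ U) ≤ c`. Hence `U` is measurable, and taking `Γ = U` gives `μ*(U) = c`. Since the
measurable sets form an algebra, they make up a Dynkin system that is closed under
intersections, which is a σ-algebra.
-/

/-- The collection of Carathéodory-measurable sets for an `E̅⁺`-valued outer
measure `μ*`. -/
def CaratheodorySets {X E : Type*} [AddCommGroup E] [PartialOrder E] [IsOrderedAddMonoid E]
    (μs : Set X → WithTop E) : Set (Set X) :=
  {Δ : Set X | ∀ Γ : Set X, μs Γ = μs (Γ ∩ Δ) + μs (Γ ∩ Δᶜ)}

open Set Finset Function

def SigmaMonotoneComplete (E : Type*) [Preorder E] : Prop :=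
  ∀ a : ℕ → E, Monotone a → BddAbove (Set.range a) → ∃ s, IsLUB (Set.range a) s

def IsSigmaSubadditive {X M : Type*} [AddCommMonoid M] [Preorder M] (μs : Set X → M) : Prop :=
  ∀ Δ : ℕ → Set X, ∀ b : M,
    IsLUB (Set.range fun N => ∑ n ∈ Finset.range N, μs (Δ n)) b → μs (⋃ n, Δ n) ≤ b

section PartialSums

variable {M : Type*} [AddCommMonoid M] [PartialOrder M] [IsOrderedAddMonoid M]

theorem monotone_partialSums {f : ℕ → M} (hf : ∀ n, 0 ≤ f n) :
    Monotone fun N => ∑ n ∈ Finset.range N, f n :=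
  fun _ _ h => Finset.sum_le_sum_of_subset_of_nonneg (Finset.range_mono h) fun n _ _ => hf n

theorem isLUB_range_partialSums_of_eq_zero {f : ℕ → M} (hf : ∀ n, 0 ≤ f n) {N : ℕ}
    (hN : ∀ n ≥ N, f n = 0) :
    IsLUB (Set.range fun M => ∑ n ∈ Finset.range M, f n) (∑ n ∈ Finset.range N, f n) := by
  refine IsGreatest.isLUB ⟨⟨N, rfl⟩, ?_⟩
  rintro _ ⟨M, rfl⟩
  rcases le_total M N with h | h
  · exact monotone_partialSums hf h
  · exact (Finset.eventually_constant_sum hN h).le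

end PartialSums

namespace WithTop

variable {E ι : Type*}

section Preorder

variable [Preorder E]

theorem isLUB_range_coe {a : ι → E} {s : E} (h : IsLUB (Set.range a) s) :
    IsLUB (Set.range fun i => (a i : WithTop E)) s := by
  refine ⟨?_, fun c hc => ?_⟩
  · rintro _ ⟨i, rfl⟩
    exact coe_le_coe.2 (h.1 ⟨i, rfl⟩)
  · induction c with
    | top => exact le_top
    | coe x => exact coe_le_coe.2 (h.2 fun _ ⟨i, hi⟩ => hi ▸ coe_le_coe.1 (hc ⟨i, rfl⟩))

theorem isLUB_range_coe_top {a : ι → E} (h : ¬BddAbove (Set.range a)) :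
    IsLUB (Set.range fun i => (a i : WithTop E)) ⊤ := by
  refine ⟨fun _ _ => le_top, fun c hc => ?_⟩
  induction c with
  | top => exact le_rfl
  | coe x => exact absurd ⟨x, fun _ ⟨i, hi⟩ => hi ▸ coe_le_coe.1 (hc ⟨i, rfl⟩)⟩ h

theorem exists_isLUB_of_monotone (hσ : SigmaMonotoneComplete E) {a : ℕ → WithTop E}
    (ha : Monotone a) : ∃ c, IsLUB (Set.range a) c := by
  by_cases htop : ∃ n, a n = ⊤
  · obtain ⟨n, hn⟩ := htop
    exact ⟨⊤, IsGreatest.isLUB ⟨⟨n, hn⟩, fun _ _ => le_top⟩⟩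
  push Not at htop
  lift a to ℕ → E using htop
  by_cases hbdd : BddAbove (Set.range a)
  · obtain ⟨s, hs⟩ := hσ a (fun _ _ h => coe_le_coe.1 (ha h)) hbdd
    exact ⟨s, isLUB_range_coe hs⟩
  · exact ⟨⊤, isLUB_range_coe_top hbdd⟩

end Preorder

variable [AddCommGroup E] [PartialOrder E] [IsOrderedAddMonoid E]

theorem add_le_of_isLUB [Nonempty ι] {a : ι → WithTop E} {c d m : WithTop E}
    (hc : IsLUB (Set.range a) c) (h : ∀ i, a i + d ≤ m) : c + d ≤ m := by
  induction d with
  | top =>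
    obtain ⟨i⟩ := ‹Nonempty ι›
    simpa using h i
  | coe d =>
    -- adding `↑(-d)` undoes adding `↑d`, so `· + ↑d` reflects `≤`
    have cancel : ∀ (x : WithTop E) {e f : E}, e + f = 0 → x + e + f = x := fun x e f h => by
      rw [add_assoc, ← coe_add, h, coe_zero, add_zero]
    have hcm : c ≤ m + ↑(-d) := hc.2 <| by
      rintro _ ⟨i, rfl⟩
      rw [← cancel (a i) (add_neg_cancel d)]
      gcongr
      exact h i
    calc c + d ≤ m + ↑(-d) + d := by gcongr
      _ = m := cancel m (neg_add_cancel d)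

end WithTop

namespace CaratheodorySets

variable {X E : Type*} [AddCommGroup E] [PartialOrder E] [IsOrderedAddMonoid E]
  {μs : Set X → WithTop E}

theorem empty_mem (h0 : μs ∅ = 0) : ∅ ∈ CaratheodorySets μs := fun Γ => by
  rw [inter_empty, compl_empty, inter_univ, h0, zero_add]

theorem compl_mem {s : Set X} (hs : s ∈ CaratheodorySets μs) : sᶜ ∈ CaratheodorySets μs :=
  fun Γ => by rw [compl_compl, add_comm]; exact hs Γ

theorem union_mem {s t : Set X} (hs : s ∈ CaratheodorySets μs) (ht : t ∈ CaratheodorySets μs) :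
    s ∪ t ∈ CaratheodorySets μs := fun Γ => by
  have e1 : Γ ∩ (s ∪ t) ∩ s = Γ ∩ s := by rw [inter_assoc, union_inter_cancel_left]
  have e2 : Γ ∩ (s ∪ t) ∩ sᶜ = Γ ∩ sᶜ ∩ t := by
    ext x; simp only [mem_inter_iff, mem_union, mem_compl_iff]; tauto
  have e3 : Γ ∩ sᶜ ∩ tᶜ = Γ ∩ (s ∪ t)ᶜ := by rw [inter_assoc, compl_union]
  rw [hs (Γ ∩ (s ∪ t)), e1, e2, hs Γ, ht (Γ ∩ sᶜ), e3, add_assoc]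

theorem inter_mem {s t : Set X} (hs : s ∈ CaratheodorySets μs) (ht : t ∈ CaratheodorySets μs) :
    s ∩ t ∈ CaratheodorySets μs := by
  simpa using compl_mem (union_mem (compl_mem hs) (compl_mem ht))

theorem biUnion_finset_mem {ι : Type*} (h0 : μs ∅ = 0) {B : ι → Set X} (s : Finset ι)
    (hB : ∀ i ∈ s, B i ∈ CaratheodorySets μs) : (⋃ i ∈ s, B i) ∈ CaratheodorySets μs := by
  classical
  induction s using Finset.induction_on with
  | empty => simpa using empty_mem h0
  | insert a s _ ih =>
    rw [Finset.set_biUnion_insert]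
    exact union_mem (hB a (mem_insert_self a s)) (ih fun i hi => hB i (mem_insert_of_mem hi))

theorem measure_inter_biUnion_finset {ι : Type*} (h0 : μs ∅ = 0) {B : ι → Set X} (s : Finset ι)
    (hB : ∀ i ∈ s, B i ∈ CaratheodorySets μs) (hd : (s : Set ι).PairwiseDisjoint B) (Γ : Set X) :
    μs (Γ ∩ ⋃ i ∈ s, B i) = ∑ i ∈ s, μs (Γ ∩ B i) := by
  classical
  induction s using Finset.induction_on with
  | empty => simp [h0]
  | insert a s has ih =>
    have hdisj : Disjoint (B a) (⋃ i ∈ s, B i) :=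
      disjoint_iUnion₂_right.2 fun i hi =>
        hd (mem_insert_self a s) (mem_insert_of_mem hi) (ne_of_mem_of_not_mem hi has).symm
    have e1 : Γ ∩ (B a ∪ ⋃ i ∈ s, B i) ∩ B a = Γ ∩ B a := by
      rw [inter_assoc, union_inter_cancel_left]
    have e2 : Γ ∩ (B a ∪ ⋃ i ∈ s, B i) ∩ (B a)ᶜ = Γ ∩ ⋃ i ∈ s, B i := by
      rw [inter_assoc, union_inter_distrib_right, inter_compl_self, empty_union,
        inter_eq_left.2 (subset_compl_iff_disjoint_left.2 hdisj)]
    rw [Finset.set_biUnion_insert, sum_insert has, hB a (mem_insert_self a s), e1, e2,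
      ih (fun i hi => hB i (mem_insert_of_mem hi)) (hd.subset (by simp))]

theorem measure_union_le (h0 : μs ∅ = 0) (hpos : ∀ s, 0 ≤ μs s) (hsub : IsSigmaSubadditive μs)
    (s t : Set X) : μs (s ∪ t) ≤ μs s + μs t := by
  set Δ : ℕ → Set X := fun n => if n = 0 then s else if n = 1 then t else ∅
  have hU : ⋃ n, Δ n = s ∪ t :=
    (iUnion_subset fun n => by dsimp only [Δ]; split_ifs <;> simp).antisymm
      (union_subset (subset_iUnion Δ 0) (subset_iUnion Δ 1))
  have hlub := isLUB_range_partialSums_of_eq_zero (fun n => hpos (Δ n)) (N := 2)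
    fun n hn => by simp [Δ, show n ≠ 0 by omega, show n ≠ 1 by omega, h0]
  simpa [hU, Finset.sum_range_succ, Δ] using hsub Δ _ hlub

theorem partialSum_add_measure_inter_compl_iUnion_le (h0 : μs ∅ = 0)
    (hmono : ∀ s t : Set X, s ⊆ t → μs s ≤ μs t) {B : ℕ → Set X}
    (hB : ∀ n, B n ∈ CaratheodorySets μs) (hd : Pairwise (Disjoint on B)) (Γ : Set X) (N : ℕ) :
    ∑ n ∈ Finset.range N, μs (Γ ∩ B n) + μs (Γ ∩ (⋃ n, B n)ᶜ) ≤ μs Γ := by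
  rw [← measure_inter_biUnion_finset h0 _ (fun n _ => hB n) (hd.set_pairwise _),
    biUnion_finset_mem h0 (Finset.range N) (fun n _ => hB n) Γ]
  gcongr
  exact hmono _ _ (inter_subset_inter_right _ (compl_subset_compl.2 (iUnion₂_subset_iUnion _ _)))

theorem iUnion_mem_of_pairwise_disjoint (hσ : SigmaMonotoneComplete E) (h0 : μs ∅ = 0)
    (hpos : ∀ s, 0 ≤ μs s) (hmono : ∀ s t : Set X, s ⊆ t → μs s ≤ μs t)
    (hsub : IsSigmaSubadditive μs) {B : ℕ → Set X} (hB : ∀ n, B n ∈ CaratheodorySets μs)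
    (hd : Pairwise (Disjoint on B)) : (⋃ n, B n) ∈ CaratheodorySets μs := fun Γ => by
  obtain ⟨c, hc⟩ := WithTop.exists_isLUB_of_monotone hσ
    (monotone_partialSums fun n => hpos (Γ ∩ B n))
  have hinter : μs (Γ ∩ ⋃ n, B n) ≤ c := inter_iUnion Γ B ▸ hsub _ c hc
  have hsum : c + μs (Γ ∩ (⋃ n, B n)ᶜ) ≤ μs Γ :=
    WithTop.add_le_of_isLUB hc (partialSum_add_measure_inter_compl_iUnion_le h0 hmono hB hd Γ)
  refine le_antisymm ?_ ((add_le_add_left hinter _).trans hsum)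
  calc μs Γ = μs ((Γ ∩ ⋃ n, B n) ∪ (Γ ∩ (⋃ n, B n)ᶜ)) := by rw [inter_union_compl]
    _ ≤ _ := measure_union_le h0 hpos hsub _ _

theorem iUnion_mem (hσ : SigmaMonotoneComplete E) (h0 : μs ∅ = 0) (hpos : ∀ s, 0 ≤ μs s)
    (hmono : ∀ s t : Set X, s ⊆ t → μs s ≤ μs t) (hsub : IsSigmaSubadditive μs) {Δ : ℕ → Set X}
    (hΔ : ∀ n, Δ n ∈ CaratheodorySets μs) : (⋃ n, Δ n) ∈ CaratheodorySets μs :=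
  let d : MeasurableSpace.DynkinSystem X :=
    ⟨(· ∈ CaratheodorySets μs), empty_mem h0, compl_mem,
      fun hd hf => iUnion_mem_of_pairwise_disjoint hσ h0 hpos hmono hsub hf hd⟩
  @MeasurableSet.iUnion X ℕ (d.toMeasurableSpace fun _ _ => inter_mem) _ Δ hΔ

theorem isLUB_partialSums_measure_iUnion (hσ : SigmaMonotoneComplete E) (h0 : μs ∅ = 0)
    (hpos : ∀ s, 0 ≤ μs s) (hmono : ∀ s t : Set X, s ⊆ t → μs s ≤ μs t)
    (hsub : IsSigmaSubadditive μs) {B : ℕ → Set X} (hB : ∀ n, B n ∈ CaratheodorySets μs)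
    (hd : Pairwise (Disjoint on B)) :
    IsLUB (Set.range fun N => ∑ n ∈ Finset.range N, μs (B n)) (μs (⋃ n, B n)) := by
  obtain ⟨c, hc⟩ := WithTop.exists_isLUB_of_monotone hσ (monotone_partialSums fun n => hpos (B n))
  have hsums : ∀ N, ∑ n ∈ Finset.range N, μs (B n) ≤ μs (⋃ n, B n) := fun N => by
    have hadd := measure_inter_biUnion_finset h0 (Finset.range N) (fun n _ => hB n)
      (hd.set_pairwise _) univ
    simp only [univ_inter] at hadd
    exact hadd ▸ hmono _ _ (iUnion₂_subset_iUnion _ _)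
  rwa [← (hsub B c hc).antisymm (hc.2 (forall_mem_range.2 hsums))] at hc

end CaratheodorySets

theorem caratheodory_measurable_sets_sigma_algebra_and_measure_general
    {X : Type*} {E : Type*} [AddCommGroup E] [PartialOrder E] [IsOrderedAddMonoid E]
    (hσ : ∀ a : ℕ → E, Monotone a → BddAbove (Set.range a) → ∃ s, IsLUB (Set.range a) s)
    (μs : Set X → WithTop E)
    (h0 : μs ∅ = 0) (hpos : ∀ s : Set X, 0 ≤ μs s)
    (hmono : ∀ s t : Set X, s ⊆ t → μs s ≤ μs t)
    (hsub : ∀ Δ : ℕ → Set X, ∀ b : WithTop E,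
      IsLUB (Set.range fun N => ∑ n ∈ Finset.range N, μs (Δ n)) b →
        μs (⋃ n, Δ n) ≤ b) :
    (∅ ∈ CaratheodorySets μs) ∧
    (∀ s ∈ CaratheodorySets μs, sᶜ ∈ CaratheodorySets μs) ∧
    (∀ Δ : ℕ → Set X, (∀ n, Δ n ∈ CaratheodorySets μs) →
      (⋃ n, Δ n) ∈ CaratheodorySets μs) ∧
    (∀ Δ : ℕ → Set X, (∀ n, Δ n ∈ CaratheodorySets μs) →
      (∀ m n, m ≠ n → Disjoint (Δ m) (Δ n)) →
      IsLUB (Set.range fun N => ∑ n ∈ Finset.range N, μs (Δ n)) (μs (⋃ n, Δ n))) :=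
  ⟨CaratheodorySets.empty_mem h0, fun _ => CaratheodorySets.compl_mem,
    fun _ => CaratheodorySets.iUnion_mem hσ h0 hpos hmono hsub,
    fun _ hΔ hd => CaratheodorySets.isLUB_partialSums_measure_iUnion hσ h0 hpos hmono hsub hΔ hd⟩

/-- For an `E̅⁺`-valued outer measure `μ*` on a set `X` (with `E` σ-monotone
complete), the collection of `μ*`-measurable (Carathéodory) sets is a σ-algebra,
and the restriction of `μ*` to it is order-σ-additive. -/
theorem caratheodory_measurable_sets_sigma_algebra_and_measure
    {X : Type*} {E : Type*} [AddCommGroup E] [PartialOrder E] [IsOrderedAddMonoid E] [Module ℝ E]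
    [PosSMulStrictMono ℝ E] [PosSMulReflectLT ℝ E]
    (hσ : ∀ a : ℕ → E, Monotone a → BddAbove (Set.range a) → ∃ s, IsLUB (Set.range a) s)
    (μs : Set X → WithTop E)
    (h0 : μs ∅ = 0) (hpos : ∀ s : Set X, 0 ≤ μs s)
    (hmono : ∀ s t : Set X, s ⊆ t → μs s ≤ μs t)
    (hsub : ∀ Δ : ℕ → Set X, ∀ b : WithTop E,
      IsLUB (Set.range fun N => ∑ n ∈ Finset.range N, μs (Δ n)) b →
        μs (⋃ n, Δ n) ≤ b) :
    (∅ ∈ CaratheodorySets μs) ∧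
    (∀ s ∈ CaratheodorySets μs, sᶜ ∈ CaratheodorySets μs) ∧
    (∀ Δ : ℕ → Set X, (∀ n, Δ n ∈ CaratheodorySets μs) →
      (⋃ n, Δ n) ∈ CaratheodorySets μs) ∧
    (∀ Δ : ℕ → Set X, (∀ n, Δ n ∈ CaratheodorySets μs) →
      (∀ m n, m ≠ n → Disjoint (Δ m) (Δ n)) →
      IsLUB (Set.range fun N => ∑ n ∈ Finset.range N, μs (Δ n)) (μs (⋃ n, Δ n))) :=
  caratheodory_measurable_sets_sigma_algebra_and_measure_general hσ μs h0 hpos hmono hsub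
end

section
/- Monotone convergence theorem for order integrals: Let (X, Ω, μ, E) be a measure space with Ω a σ-algebra. If (f_n) is a sequence of measurable functions X → [0,∞] and f : X → [0,∞] is measurable with f_n(x) ↑ f(x) for μ-almost all x ∈ X, then ∫ᵒ f_n dμ ↑ ∫ᵒ f dμ in E̅, i.e., ⋁_n ∫ᵒ f_n dμ = ∫ᵒ f dμ. -/
open MeasureTheory

/-- The action of `ℝ⁺` (as `ℝ≥0`) on `E̅⁺ ⊆ WithTop E`: `r • ∞ = ∞` for
`r > 0` and `0 • ∞ = 0`. -/
noncomputable def eSMul {E : Type*} [AddCommGroup E] [Module ℝ E]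
    (r : NNReal) (x : WithTop E) : WithTop E :=
  if r = 0 then 0 else x.map fun e => (r : ℝ) • e

/-- The order integral of a nonnegative elementary (finite-valued simple
measurable) function with respect to a set map `μ : Ω → E̅⁺`. -/
noncomputable def elemOInt {X : Type*} [MeasurableSpace X]
    {E : Type*} [AddCommGroup E] [Module ℝ E]
    (μ : Set X → WithTop E) (φ : SimpleFunc X NNReal) : WithTop E :=
  ∑ r ∈ φ.range, eSMul r (μ (⇑φ ⁻¹' {r}))

/-- `μ : Ω → E̅⁺` is an order-σ-additive `E̅⁺`-valued measure on the σ-algebra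
of measurable sets. -/
def IsOMeasure {X : Type*} [MeasurableSpace X]
    {E : Type*} [AddCommGroup E] [PartialOrder E] (μ : Set X → WithTop E) : Prop :=
  μ ∅ = 0 ∧ (∀ s : Set X, MeasurableSet s → 0 ≤ μ s) ∧
  ∀ Δ : ℕ → Set X, (∀ n, MeasurableSet (Δ n)) →
    (∀ m n, m ≠ n → Disjoint (Δ m) (Δ n)) →
    IsLUB (Set.range fun N => ∑ n ∈ Finset.range N, μ (Δ n)) (μ (⋃ n, Δ n))


/-- `I ∈ E̅⁺` is the order integral of the measurable function `f : X → [0,∞]`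
with respect to `μ`: it is the supremum of the order integrals of some (hence,
by well-definedness, any) sequence of nonnegative elementary functions
increasing pointwise to `f`. -/
def HasOInt {X : Type*} [MeasurableSpace X]
    {E : Type*} [AddCommGroup E] [PartialOrder E] [Module ℝ E]
    (μ : Set X → WithTop E) (f : X → ENNReal) (I : WithTop E) : Prop :=
  ∃ φ : ℕ → SimpleFunc X NNReal,
    (∀ x : X, Monotone fun n => φ n x) ∧
    (∀ x : X, (⨆ n, ((φ n x : ENNReal))) = f x) ∧
    IsLUB (Set.range fun n => elemOInt μ (φ n)) I

/-!
The whole argument rests on one comparison: if a simple function `φ` lies a.e. below the supremum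
of an increasing sequence of simple functions `ψ n`, then `∫ᵒ φ` is below every upper bound `K` of
the `∫ᵒ ψ n`. For `0 < c < 1` the measurable sets `{c • φ ≤ ψ n}` increase to `X`, so continuity of
`μ` from below gives `c • ∫ᵒ φ ≤ K`; letting `c → 1` needs the Archimedean property of `E`, which
follows from σ-monotone completeness. The comparison gives monotonicity of `∫ᵒ f n` and
`∫ᵒ f n ≤ ∫ᵒ g`. Conversely, if `Φ n k ↑ f n` are the approximants, the diagonal maxima
`max_{n ≤ j} Φ n j` increase to `g` a.e. and stay below `f j`, so `∫ᵒ g` is below every upper bound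
of the `∫ᵒ f n`.
-/

open Function
open scoped NNReal ENNReal

section eSMul

variable {E : Type*} [AddCommGroup E] [Module ℝ E]

@[simp] lemma eSMul_zero_left (x : WithTop E) : eSMul 0 x = 0 := if_pos rfl

lemma eSMul_coe {r : ℝ≥0} (hr : r ≠ 0) (e : E) : eSMul r (e : WithTop E) = ((r : ℝ) • e : E) := by
  rw [eSMul, if_neg hr, WithTop.map_coe]

lemma eSMul_top {r : ℝ≥0} (hr : r ≠ 0) : eSMul r (⊤ : WithTop E) = ⊤ := by
  rw [eSMul, if_neg hr, WithTop.map_top]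

@[simp] lemma eSMul_zero (r : ℝ≥0) : eSMul r (0 : WithTop E) = 0 := by
  rcases eq_or_ne r 0 with rfl | hr
  · exact eSMul_zero_left 0
  · rw [← WithTop.coe_zero, eSMul_coe hr, smul_zero]

lemma eSMul_add (r : ℝ≥0) (x y : WithTop E) : eSMul r (x + y) = eSMul r x + eSMul r y := by
  rcases eq_or_ne r 0 with rfl | hr
  · simp
  · induction x <;> induction y <;> simp [eSMul_top hr, eSMul_coe hr, ← WithTop.coe_add, smul_add]

lemma eSMul_sum {ι : Type*} (r : ℝ≥0) (t : Finset ι) (x : ι → WithTop E) :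
    eSMul r (∑ i ∈ t, x i) = ∑ i ∈ t, eSMul r (x i) :=
  map_sum (⟨⟨eSMul r, eSMul_zero r⟩, eSMul_add r⟩ : WithTop E →+ WithTop E) x t

lemma eSMul_mul (c r : ℝ≥0) (x : WithTop E) : eSMul (c * r) x = eSMul c (eSMul r x) := by
  rcases eq_or_ne c 0 with rfl | hc
  · simp
  rcases eq_or_ne r 0 with rfl | hr
  · simp
  induction x <;> simp [eSMul_top, eSMul_coe, hc, hr, mul_smul]

variable [PartialOrder E] [PosSMulStrictMono ℝ E]

lemma eSMul_eq_withTopCongr {r : ℝ≥0} (hr : (0 : ℝ) < r) (x : WithTop E) :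
    eSMul r x = (OrderIso.smulRight (β := E) hr).withTopCongr x := by
  have hr' : r ≠ 0 := by exact_mod_cast hr.ne'
  induction x <;> simp [eSMul_top hr', eSMul_coe hr']

lemma eSMul_mono (r : ℝ≥0) : Monotone (eSMul (E := E) r) := by
  rcases eq_or_ne r 0 with rfl | hr
  · simp [Monotone]
  have hr' : (0 : ℝ) < r := NNReal.coe_pos.2 (pos_iff_ne_zero.2 hr)
  intro x y h
  simpa only [eSMul_eq_withTopCongr hr'] using
    (OrderIso.smulRight (β := E) hr').withTopCongr.monotone h

lemma IsLUB.range_eSMul {ι : Type*} [Nonempty ι] {a : ι → WithTop E} {A : WithTop E}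
    (hA : IsLUB (Set.range a) A) (r : ℝ≥0) :
    IsLUB (Set.range fun i => eSMul r (a i)) (eSMul r A) := by
  rcases eq_or_ne r 0 with rfl | hr
  · simpa only [eSMul_zero_left, Set.range_const] using isLUB_singleton
  have hr' : (0 : ℝ) < r := NNReal.coe_pos.2 (pos_iff_ne_zero.2 hr)
  simp only [eSMul_eq_withTopCongr hr']
  rw [← Function.comp_def _ a, Set.range_comp]
  exact (OrderIso.smulRight hr').withTopCongr.isLUB_image'.2 hA

lemma eSMul_nonneg (r : ℝ≥0) {x : WithTop E} (hx : 0 ≤ x) : 0 ≤ eSMul r x :=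
  eSMul_zero (E := E) r ▸ eSMul_mono r hx

variable [IsOrderedAddMonoid E]

lemma eSMul_le_eSMul_left {r s : ℝ≥0} (hrs : r ≤ s) {x : WithTop E} (hx : 0 ≤ x) :
    eSMul r x ≤ eSMul s x := by
  rcases eq_or_ne r 0 with rfl | hr
  · simpa using eSMul_nonneg s hx
  have hs : s ≠ 0 := (lt_of_lt_of_le (pos_iff_ne_zero.mpr hr) hrs).ne'
  induction x with
  | top => rw [eSMul_top hr, eSMul_top hs]
  | coe a =>
    rw [eSMul_coe hr, eSMul_coe hs, WithTop.coe_le_coe]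
    exact smul_le_smul_of_nonneg_right (by exact_mod_cast hrs) (WithTop.coe_nonneg.mp hx)

end eSMul

lemma Monotone.isLUB_range_comp_iff {α : Type*} [Preorder α] {a : ℕ → α} (ha : Monotone a)
    {g : ℕ → ℕ} (hg : Filter.Tendsto g Filter.atTop Filter.atTop) {x : α} :
    IsLUB (Set.range (a ∘ g)) x ↔ IsLUB (Set.range a) x := by
  rw [IsLUB, ha.upperBounds_range_comp_tendsto_atTop hg, IsLUB]

namespace IsOMeasure

variable {X : Type*} [MeasurableSpace X] {E : Type*} [AddCommGroup E] [PartialOrder E]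
  {μ : Set X → WithTop E}

lemma nonneg (hμ : IsOMeasure μ) {s : Set X} (hs : MeasurableSet s) : 0 ≤ μ s := hμ.2.1 s hs

variable [IsOrderedAddMonoid E]

lemma monotone_sum_range (hμ : IsOMeasure μ) {Δ : ℕ → Set X} (hΔ : ∀ n, MeasurableSet (Δ n)) :
    Monotone fun N => ∑ n ∈ Finset.range N, μ (Δ n) :=
  monotone_nat_of_le_succ fun N => by
    rw [Finset.sum_range_succ]
    exact le_add_of_nonneg_right (hμ.nonneg (hΔ N))

lemma isLUB_sum_range (hμ : IsOMeasure μ) {Δ : ℕ → Set X} (hΔ : ∀ n, MeasurableSet (Δ n))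
    (hd : Pairwise (Disjoint on Δ)) {g : ℕ → ℕ} (hg : Filter.Tendsto g Filter.atTop Filter.atTop) :
    IsLUB (Set.range fun n => ∑ k ∈ Finset.range (g n), μ (Δ k)) (μ (⋃ n, Δ n)) :=
  ((hμ.monotone_sum_range hΔ).isLUB_range_comp_iff hg).2 (hμ.2.2 Δ hΔ fun _ _ h => hd h)

lemma union (hμ : IsOMeasure μ) {s t : Set X} (hs : MeasurableSet s) (ht : MeasurableSet t)
    (hst : Disjoint s t) : μ (s ∪ t) = μ s + μ t := by
  let Δ : ℕ → Set X := fun n => if n = 0 then s else if n = 1 then t else ∅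
  have hΔ : ∀ n, MeasurableSet (Δ n) := by
    intro n; dsimp only [Δ]; split_ifs <;> simp [hs, ht]
  have hd : Pairwise (Disjoint on Δ) := by
    intro m n hmn
    dsimp only [Function.onFun, Δ]
    split_ifs <;> first | omega | exact hst | exact hst.symm | simp
  have hU : ⋃ n, Δ n = s ∪ t := by
    ext x
    simp only [Set.mem_iUnion, Set.mem_union]
    constructor
    · rintro ⟨n, hn⟩
      dsimp only [Δ] at hn
      split_ifs at hn <;> simp_all
    · rintro (hx | hx)
      exacts [⟨0, by simpa [Δ]⟩, ⟨1, by simpa [Δ]⟩]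
  have hsum : ∀ n, ∑ k ∈ Finset.range (n + 2), μ (Δ k) = μ s + μ t := by
    intro n
    have hΔ2 : ∀ k, μ (Δ (2 + k)) = 0 := fun k => by
      simp only [Δ, if_neg (by omega : 2 + k ≠ 0), if_neg (by omega : 2 + k ≠ 1), hμ.1]
    rw [add_comm, Finset.sum_range_add, Finset.sum_eq_zero fun k _ => hΔ2 k, add_zero]
    simp [Finset.sum_range_succ, Δ]
  have := hμ.isLUB_sum_range hΔ hd (Filter.tendsto_add_atTop_nat 2)
  simp only [hsum, Set.range_const, hU] at this
  exact this.unique isLUB_singleton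

lemma mono (hμ : IsOMeasure μ) {s t : Set X} (hs : MeasurableSet s) (ht : MeasurableSet t)
    (hst : s ⊆ t) : μ s ≤ μ t := by
  rw [← Set.union_sdiff_cancel hst, hμ.union hs (ht.diff hs) Set.disjoint_sdiff_right]
  exact le_add_of_nonneg_right (hμ.nonneg (ht.diff hs))

lemma diff_null (hμ : IsOMeasure μ) {s N : Set X} (hs : MeasurableSet s) (hN : MeasurableSet N)
    (hN0 : μ N = 0) : μ (s \ N) = μ s := by
  have hsN : μ (s ∩ N) = 0 :=
    le_antisymm (hN0 ▸ hμ.mono (hs.inter hN) hN Set.inter_subset_right) (hμ.nonneg (hs.inter hN))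
  rw [← add_zero (μ (s \ N)), ← hsN, ← hμ.union (hs.diff hN) (hs.inter hN)
    (Set.disjoint_sdiff_left.mono_right Set.inter_subset_right), Set.sdiff_union_inter]

lemma isLUB_iUnion_of_monotone (hμ : IsOMeasure μ) {s : ℕ → Set X} (hs : ∀ n, MeasurableSet (s n))
    (hmono : Monotone s) : IsLUB (Set.range fun n => μ (s n)) (μ (⋃ n, s n)) := by
  have hsum : ∀ n, ∑ k ∈ Finset.range (n + 1), μ (disjointed s k) = μ (s n) := by
    intro n
    induction n with
    | zero => simp
    | succ n ih =>
      have hsucc : disjointed s (n + 1) = s (n + 1) \ s n := hmono.disjointed_succ (not_isMax n)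
      rw [Finset.sum_range_succ, ih, hsucc, ← hμ.union (hs n) ((hs _).diff (hs n))
        Set.disjoint_sdiff_right, Set.union_sdiff_cancel (hmono n.le_succ)]
  have := isLUB_sum_range hμ (MeasurableSet.disjointed hs) (disjoint_disjointed s)
    (Filter.tendsto_add_atTop_nat 1)
  simpa only [hsum, iUnion_disjointed] using this

lemma eq_sum_inter_fiber (hμ : IsOMeasure μ) {β : Type*} (φ : MeasureTheory.SimpleFunc X β)
    {B : Set X} (hB : MeasurableSet B) : μ B = ∑ r ∈ φ.range, μ (B ∩ φ ⁻¹' {r}) := by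
  classical
  suffices h : ∀ t : Finset β, μ (B ∩ φ ⁻¹' t) = ∑ r ∈ t, μ (B ∩ φ ⁻¹' {r}) by
    rw [← h, SimpleFunc.coe_range, Set.preimage_range, Set.inter_univ]
  intro t
  induction t using Finset.induction with
  | empty => simpa using hμ.1
  | insert a t ha ih =>
    rw [Finset.sum_insert ha, ← ih, Finset.coe_insert, Set.insert_eq, Set.preimage_union,
      Set.inter_union_distrib_left, hμ.union (hB.inter (φ.measurableSet_fiber a))
        (hB.inter (φ.measurableSet_preimage _))]
    exact Set.disjoint_left.2 fun x hx hx' => ha ((hx.2 : φ x = a) ▸ hx'.2)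

end IsOMeasure

section WithTopLUB

variable {E : Type*} [AddCommGroup E] [PartialOrder E] [IsOrderedAddMonoid E]

lemma IsLUB.range_add_const {ι : Type*} [Nonempty ι] {a : ι → WithTop E} {A : WithTop E}
    (hA : IsLUB (Set.range a) A) (c : WithTop E) :
    IsLUB (Set.range fun i => a i + c) (A + c) := by
  induction c with
  | top => simpa only [WithTop.add_top, Set.range_const] using isLUB_singleton
  | coe e =>
    have key : ∀ x : WithTop E, x + e = (OrderIso.addRight e).withTopCongr x := by
      intro x; induction x <;> simp [← WithTop.coe_add]
    simp only [key]
    rw [← Function.comp_def _ a, Set.range_comp]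
    exact (OrderIso.addRight e).withTopCongr.isLUB_image'.2 hA

lemma isLUB_range_add_of_monotone {a b : ℕ → WithTop E} (ha : Monotone a) (hb : Monotone b)
    {A B : WithTop E} (hA : IsLUB (Set.range a) A) (hB : IsLUB (Set.range b) B) :
    IsLUB (Set.range fun n => a n + b n) (A + B) := by
  refine ⟨?_, fun u hu => ?_⟩
  · rintro _ ⟨n, rfl⟩
    exact add_le_add (hA.1 ⟨n, rfl⟩) (hB.1 ⟨n, rfl⟩)
  have hcross : ∀ n m, a n + b m ≤ u := fun n m =>
    (add_le_add (ha (le_max_left n m)) (hb (le_max_right n m))).trans (hu ⟨max n m, rfl⟩)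
  have hAb : ∀ m, A + b m ≤ u := fun m =>
    (hA.range_add_const (b m)).2 (by rintro _ ⟨n, rfl⟩; exact hcross n m)
  simp only [add_comm A] at hAb ⊢
  exact (hB.range_add_const A).2 (by rintro _ ⟨m, rfl⟩; exact hAb m)

lemma isLUB_range_sum_of_monotone {ι : Type*} (t : Finset ι) {a : ι → ℕ → WithTop E}
    {A : ι → WithTop E} (ha : ∀ i ∈ t, Monotone (a i))
    (hA : ∀ i ∈ t, IsLUB (Set.range (a i)) (A i)) :
    IsLUB (Set.range fun n => ∑ i ∈ t, a i n) (∑ i ∈ t, A i) := by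
  classical
  induction t using Finset.induction with
  | empty => simpa only [Finset.sum_empty, Set.range_const] using isLUB_singleton
  | insert j t hj ih =>
    simp only [Finset.sum_insert hj]
    refine isLUB_range_add_of_monotone (ha j (t.mem_insert_self j))
      (fun n m hnm => Finset.sum_le_sum fun i hi => ha i (Finset.mem_insert_of_mem hi) hnm)
      (hA j (t.mem_insert_self j)) (ih (fun i hi => ha i (Finset.mem_insert_of_mem hi))
        (fun i hi => hA i (Finset.mem_insert_of_mem hi)))

end WithTopLUB

section ElemOInt

open MeasureTheory.SimpleFunc

variable {X : Type*} [MeasurableSpace X] {E : Type*} [AddCommGroup E] [Module ℝ E]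
  {μ : Set X → WithTop E}

lemma elemOInt_eq_sum_of_subset (hμ0 : μ ∅ = 0) (φ : SimpleFunc X ℝ≥0) {T : Finset ℝ≥0}
    (hT : ∀ x, φ x ≠ 0 → φ x ∈ T) : elemOInt μ φ = ∑ r ∈ T, eSMul r (μ (φ ⁻¹' {r})) := by
  classical
  have hzero : ∀ r, r ∉ φ.range → eSMul r (μ (φ ⁻¹' {r})) = 0 := fun r hr => by
    rw [(φ.preimage_eq_empty_iff r).2 hr, hμ0, eSMul_zero]
  rw [elemOInt, Finset.sum_subset Finset.subset_union_left fun r _ hr => hzero r hr]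
  refine (Finset.sum_subset Finset.subset_union_right fun r hr hrT => ?_).symm
  rcases eq_or_ne r 0 with rfl | hr0
  · exact eSMul_zero_left _
  refine hzero r fun hrφ => hrT ?_
  obtain ⟨x, rfl⟩ := mem_range.1 hrφ
  exact hT x hr0

lemma elemOInt_restrict (hμ0 : μ ∅ = 0) (φ : SimpleFunc X ℝ≥0) {A : Set X} (hA : MeasurableSet A) :
    elemOInt μ (φ.restrict A) = ∑ r ∈ φ.range, eSMul r (μ (φ ⁻¹' {r} ∩ A)) := by
  rw [elemOInt_eq_sum_of_subset hμ0 _ (T := φ.range) fun x hx => ?_]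
  · refine Finset.sum_congr rfl fun r _ => ?_
    rcases eq_or_ne r 0 with rfl | hr0
    · simp only [eSMul_zero_left]
    · rw [restrict_preimage_singleton _ hA hr0, Set.inter_comm]
  · rw [restrict_apply _ hA] at hx ⊢
    by_cases hxA : x ∈ A
    · simpa only [Set.indicator_of_mem hxA] using φ.mem_range_self x
    · simp [Set.indicator_of_notMem hxA] at hx

lemma elemOInt_map_const_mul (c : ℝ≥0) (hc : c ≠ 0) (φ : SimpleFunc X ℝ≥0) :
    elemOInt μ (φ.map (c * ·)) = eSMul c (elemOInt μ φ) := by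
  classical
  have hinj : Function.Injective (c * · : ℝ≥0 → ℝ≥0) := mul_right_injective₀ hc
  rw [elemOInt, elemOInt, eSMul_sum, range_map, Finset.sum_image fun x _ y _ h => hinj h]
  refine Finset.sum_congr rfl fun r _ => ?_
  have hfiber : φ.map (c * ·) ⁻¹' {c * r} = φ ⁻¹' {r} := by
    ext x
    simp [hinj.eq_iff]
  rw [hfiber, eSMul_mul]

variable [PartialOrder E] [IsOrderedAddMonoid E]

lemma elemOInt_eq_sum_sum_fiber_inter (hμ : IsOMeasure μ) (φ ψ : SimpleFunc X ℝ≥0) :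
    elemOInt μ φ = ∑ r ∈ φ.range, ∑ s ∈ ψ.range, eSMul r (μ (φ ⁻¹' {r} ∩ ψ ⁻¹' {s})) :=
  Finset.sum_congr rfl fun r _ => by
    rw [hμ.eq_sum_inter_fiber ψ (φ.measurableSet_fiber r), eSMul_sum]

lemma elemOInt_restrict_compl_null (hμ : IsOMeasure μ) (φ : SimpleFunc X ℝ≥0) {N : Set X}
    (hN : MeasurableSet N) (hN0 : μ N = 0) : elemOInt μ (φ.restrict Nᶜ) = elemOInt μ φ := by
  rw [elemOInt_restrict hμ.1 φ hN.compl]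
  exact Finset.sum_congr rfl fun r _ => by
    rw [← Set.sdiff_eq, hμ.diff_null (φ.measurableSet_fiber r) hN hN0]

variable [PosSMulStrictMono ℝ E]

lemma elemOInt_nonneg (hμ : IsOMeasure μ) (φ : SimpleFunc X ℝ≥0) : 0 ≤ elemOInt μ φ :=
  Finset.sum_nonneg fun r _ => eSMul_nonneg r (hμ.nonneg (φ.measurableSet_fiber r))

lemma elemOInt_mono (hμ : IsOMeasure μ) {φ ψ : SimpleFunc X ℝ≥0} (h : φ ≤ ψ) :
    elemOInt μ φ ≤ elemOInt μ ψ := by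
  rw [elemOInt_eq_sum_sum_fiber_inter hμ φ ψ, elemOInt_eq_sum_sum_fiber_inter hμ ψ φ,
    Finset.sum_comm (s := ψ.range)]
  refine Finset.sum_le_sum fun r _ => Finset.sum_le_sum fun s _ => ?_
  rw [Set.inter_comm (ψ ⁻¹' {s})]
  rcases (φ ⁻¹' {r} ∩ ψ ⁻¹' {s}).eq_empty_or_nonempty with he | ⟨x, hxr, hxs⟩
  · rw [he, hμ.1, eSMul_zero, eSMul_zero]
  · have hrs : r ≤ s := (hxr : φ x = r) ▸ (hxs : ψ x = s) ▸ h x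
    exact eSMul_le_eSMul_left hrs (hμ.nonneg ((φ.measurableSet_fiber r).inter
      (ψ.measurableSet_fiber s)))

lemma isLUB_elemOInt_restrict (hμ : IsOMeasure μ) (φ : SimpleFunc X ℝ≥0) {A : ℕ → Set X}
    (hA : ∀ n, MeasurableSet (A n)) (hAmono : Monotone A) (hAU : ⋃ n, A n = Set.univ) :
    IsLUB (Set.range fun n => elemOInt μ (φ.restrict (A n))) (elemOInt μ φ) := by
  simp only [elemOInt_restrict hμ.1 φ (hA _)]
  refine isLUB_range_sum_of_monotone _ (fun r _ n m hnm => eSMul_mono r ?_) fun r _ => ?_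
  · exact hμ.mono ((φ.measurableSet_fiber r).inter (hA n)) ((φ.measurableSet_fiber r).inter (hA m))
      (Set.inter_subset_inter_right _ (hAmono hnm))
  · have := hμ.isLUB_iUnion_of_monotone (fun n => (φ.measurableSet_fiber r).inter (hA n))
      fun n m hnm => Set.inter_subset_inter_right _ (hAmono hnm)
    rw [← Set.inter_iUnion, hAU, Set.inter_univ] at this
    exact this.range_eSMul r

end ElemOInt

section Archimedean

variable {E : Type*} [AddCommGroup E] [PartialOrder E] [IsOrderedAddMonoid E] [Module ℝ E]
  [PosSMulStrictMono ℝ E]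

/-- σ-monotone completeness makes `E` Archimedean: the increasing sequence `-(n + 2)⁻¹ • a` has a
supremum `s`, which satisfies `s ≤ 2 • s`, i.e. `0 ≤ s`, because doubling the sequence gives back a
subsequence of it. -/
lemma nonpos_of_forall_le_inv_smul
    (hσ : ∀ a : ℕ → E, Monotone a → BddAbove (Set.range a) → ∃ s, IsLUB (Set.range a) s)
    {x a : E} (ha : 0 ≤ a) (h : ∀ n : ℕ, x ≤ ((n : ℝ) + 2)⁻¹ • a) : x ≤ 0 := by
  set u : ℕ → E := fun n => -(((n : ℝ) + 2)⁻¹ • a)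
  have hu : Monotone u := fun n m hnm => neg_le_neg <| smul_le_smul_of_nonneg_right
    (inv_anti₀ (by positivity) (by gcongr)) ha
  obtain ⟨s, hs⟩ := hσ u hu ⟨-x, by rintro _ ⟨n, rfl⟩; exact neg_le_neg (h n)⟩
  have hdouble : ∀ n, u n = (2 : ℝ) • u (2 * n + 2) := fun n => by
    simp only [u, smul_neg, smul_smul]
    congr 2
    push_cast
    field_simp
    ring
  have hs2 : s ≤ (2 : ℝ) • s := hs.2 <| by
    rintro _ ⟨n, rfl⟩
    exact hdouble n ▸ smul_le_smul_of_nonneg_left (hs.1 ⟨_, rfl⟩) zero_le_two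
  have hs0 : 0 ≤ s := by rwa [two_smul, le_add_iff_nonneg_left] at hs2
  exact neg_nonneg.1 (hs0.trans (hs.2 (by rintro _ ⟨n, rfl⟩; exact neg_le_neg (h n))))

lemma le_of_forall_eSMul_le
    (hσ : ∀ a : ℕ → E, Monotone a → BddAbove (Set.range a) → ∃ s, IsLUB (Set.range a) s)
    {a K : WithTop E} (ha : 0 ≤ a) (h : ∀ c : ℝ≥0, c ≠ 0 → c < 1 → eSMul c a ≤ K) : a ≤ K := by
  induction a with
  | top =>
    simpa only [eSMul_top (by norm_num : (2⁻¹ : ℝ≥0) ≠ 0)] using h 2⁻¹ (by norm_num) (by norm_num)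
  | coe a =>
  induction K with
  | top => exact le_top
  | coe K =>
  rw [WithTop.coe_le_coe, ← sub_nonpos]
  refine nonpos_of_forall_le_inv_smul hσ (WithTop.coe_nonneg.1 ha) fun n => ?_
  have hlt : ((n : ℝ≥0) + 2)⁻¹ < 1 := inv_lt_one_of_one_lt₀ <|
    lt_add_of_nonneg_of_lt zero_le one_lt_two
  set c : ℝ≥0 := 1 - ((n : ℝ≥0) + 2)⁻¹
  have hc : (c : ℝ) = 1 - ((n : ℝ) + 2)⁻¹ := by
    rw [NNReal.coe_sub hlt.le]
    push_cast; rfl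
  have hc0 : c ≠ 0 := (tsub_pos_of_lt hlt).ne'
  have := h c hc0 (tsub_lt_self one_pos (by positivity))
  rw [eSMul_coe hc0, WithTop.coe_le_coe, hc, sub_smul, one_smul] at this
  rwa [sub_le_comm]

end Archimedean

section Comparison

open MeasureTheory.SimpleFunc

variable {X : Type*} [MeasurableSpace X] {E : Type*} [AddCommGroup E] [PartialOrder E]
  [IsOrderedAddMonoid E] [Module ℝ E] [PosSMulStrictMono ℝ E] {μ : Set X → WithTop E}

/-- For `0 < c < 1` the sets `{c • φ ≤ ψ n}` exhaust `X`, whence `c • ∫ φ ≤ K`; then let `c → 1`. -/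
lemma elemOInt_le_of_ae_le_iSup
    (hσ : ∀ a : ℕ → E, Monotone a → BddAbove (Set.range a) → ∃ s, IsLUB (Set.range a) s)
    (hμ : IsOMeasure μ) {φ : SimpleFunc X ℝ≥0} {ψ : ℕ → SimpleFunc X ℝ≥0} (hψ : Monotone ψ)
    {N : Set X} (hN : MeasurableSet N) (hN0 : μ N = 0)
    (hle : ∀ x ∉ N, (φ x : ℝ≥0∞) ≤ ⨆ n, (ψ n x : ℝ≥0∞))
    {K : WithTop E} (hK : ∀ n, elemOInt μ (ψ n) ≤ K) : elemOInt μ φ ≤ K := by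
  rw [← elemOInt_restrict_compl_null hμ φ hN hN0]
  refine le_of_forall_eSMul_le hσ (elemOInt_nonneg hμ _) fun c hc0 hc1 => ?_
  rw [← elemOInt_map_const_mul c hc0]
  set χ := (φ.restrict Nᶜ).map (c * ·)
  let A : ℕ → Set X := fun n => {x | χ x ≤ ψ n x}
  have hA : ∀ n, MeasurableSet (A n) := fun n => measurableSet_le χ.measurable (ψ n).measurable
  have hAU : ⋃ n, A n = Set.univ := by
    refine Set.eq_univ_of_forall fun x => Set.mem_iUnion.2 ?_
    rcases eq_or_ne (χ x) 0 with h0 | h0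
    · exact ⟨0, h0.trans_le zero_le⟩
    have hχ : χ x = c * Nᶜ.indicator φ x := by rw [map_apply, restrict_apply _ hN.compl]
    have hxN : x ∉ N := fun hxN => h0 (by simp [hχ, hxN])
    rw [hχ, Set.indicator_of_mem hxN] at h0
    have : (χ x : ℝ≥0∞) < ⨆ n, (ψ n x : ℝ≥0∞) := by
      refine lt_of_lt_of_le ?_ (hle x hxN)
      rw [hχ, Set.indicator_of_mem hxN, ENNReal.coe_lt_coe]
      exact mul_lt_of_lt_one_left (pos_of_ne_zero (right_ne_zero_of_mul h0)) hc1
    obtain ⟨n, hn⟩ := lt_iSup_iff.1 this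
    exact ⟨n, ENNReal.coe_le_coe.1 hn.le⟩
  refine (isLUB_elemOInt_restrict hμ χ hA (fun n m hnm x hx => hx.trans (hψ hnm x)) hAU).2 ?_
  rintro _ ⟨n, rfl⟩
  refine (elemOInt_mono hμ fun x => ?_).trans (hK n)
  rw [restrict_apply _ (hA n)]
  exact Set.indicator_apply_le' id fun _ => zero_le

end Comparison

namespace HasOInt

variable {X : Type*} [MeasurableSpace X] {E : Type*} [AddCommGroup E] [PartialOrder E]
  [IsOrderedAddMonoid E] [Module ℝ E] [PosSMulStrictMono ℝ E] {μ : Set X → WithTop E}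
  {h : X → ℝ≥0∞} {I : WithTop E}

lemma le_of_ae_le_iSup
    (hσ : ∀ a : ℕ → E, Monotone a → BddAbove (Set.range a) → ∃ s, IsLUB (Set.range a) s)
    (hμ : IsOMeasure μ) (hI : HasOInt μ h I) {ψ : ℕ → SimpleFunc X ℝ≥0} (hψ : Monotone ψ)
    {N : Set X} (hN : MeasurableSet N) (hN0 : μ N = 0) (hle : ∀ x ∉ N, h x ≤ ⨆ n, (ψ n x : ℝ≥0∞))
    {K : WithTop E} (hK : ∀ n, elemOInt μ (ψ n) ≤ K) : I ≤ K := by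
  obtain ⟨Φ, -, hΦh, hΦI⟩ := hI
  refine hΦI.2 ?_
  rintro _ ⟨k, rfl⟩
  refine elemOInt_le_of_ae_le_iSup hσ hμ hψ hN hN0 (fun x hx => ?_) hK
  exact (le_iSup (fun k => (Φ k x : ℝ≥0∞)) k).trans ((hΦh x).trans_le (hle x hx))

lemma mono
    (hσ : ∀ a : ℕ → E, Monotone a → BddAbove (Set.range a) → ∃ s, IsLUB (Set.range a) s)
    (hμ : IsOMeasure μ) (hI : HasOInt μ h I) {h' : X → ℝ≥0∞} {I' : WithTop E}
    (hI' : HasOInt μ h' I') {N : Set X} (hN : MeasurableSet N) (hN0 : μ N = 0)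
    (hle : ∀ x ∉ N, h x ≤ h' x) : I ≤ I' := by
  obtain ⟨Φ, hΦ, hΦh, hΦI⟩ := hI'
  exact hI.le_of_ae_le_iSup hσ hμ (fun m n hmn x => hΦ x hmn) hN hN0
    (fun x hx => (hle x hx).trans (hΦh x).ge) fun n => hΦI.1 ⟨n, rfl⟩

end HasOInt

section DiagSup

variable {α : Type*} [SemilatticeSup α] [OrderBot α]

def diagSup (a : ℕ → ℕ → α) (j : ℕ) : α :=
  (Finset.range (j + 1)).sup fun n => a n j

lemma monotone_diagSup {a : ℕ → ℕ → α} (ha : ∀ n, Monotone (a n)) : Monotone (diagSup a) :=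
  fun _ k hjk => Finset.sup_le fun n hn => (ha n hjk).trans <|
    Finset.le_sup (f := fun i => a i k) (Finset.range_subset_range.2 (Nat.succ_le_succ hjk) hn)

lemma le_diagSup {a : ℕ → ℕ → α} (ha : ∀ n, Monotone (a n)) (n k : ℕ) :
    a n k ≤ diagSup a (max n k) :=
  (ha n (le_max_right n k)).trans <| Finset.le_sup (f := fun i => a i (max n k)) <|
    Finset.mem_range.2 (Nat.lt_add_one_of_le (le_max_left n k))

lemma diagSup_le {a : ℕ → ℕ → α} {j : ℕ} {b : α} (h : ∀ n ≤ j, a n j ≤ b) : diagSup a j ≤ b :=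
  Finset.sup_le fun n hn => h n (Nat.lt_succ_iff.1 (Finset.mem_range.1 hn))

lemma coe_diagSup_apply {X : Type*} [MeasurableSpace X] (Φ : ℕ → ℕ → SimpleFunc X ℝ≥0) (j : ℕ)
    (x : X) : (diagSup Φ j x : ℝ≥0∞) = diagSup (fun n k => (Φ n k x : ℝ≥0∞)) j := by
  rw [diagSup, diagSup, SimpleFunc.finset_sup_apply, ENNReal.coe_finset_sup]

end DiagSup

theorem order_integral_monotone_convergence_general
    {X : Type*} [MeasurableSpace X]
    {E : Type*} [AddCommGroup E] [PartialOrder E] [IsOrderedAddMonoid E] [Module ℝ E]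
    [PosSMulStrictMono ℝ E]
    (hσ : ∀ a : ℕ → E, Monotone a → BddAbove (Set.range a) → ∃ s, IsLUB (Set.range a) s)
    (μ : Set X → WithTop E) (hμ : IsOMeasure μ)
    (f : ℕ → X → ENNReal)
    (g : X → ENNReal)
    (hae : ∃ N : Set X, MeasurableSet N ∧ μ N = 0 ∧
      ∀ x ∉ N, (Monotone fun n => f n x) ∧ (⨆ n, f n x) = g x)
    (I : ℕ → WithTop E) (hI : ∀ n, HasOInt μ (f n) (I n))
    (J : WithTop E) (hJ : HasOInt μ g J) :
    Monotone I ∧ IsLUB (Set.range I) J := by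
  obtain ⟨N, hN, hN0, hfg⟩ := hae
  refine ⟨fun n m hnm => (hI n).mono hσ hμ (hI m) hN hN0 fun x hx => (hfg x hx).1 hnm,
    ?_, fun K hK => ?_⟩
  · rintro _ ⟨n, rfl⟩
    exact (hI n).mono hσ hμ hJ hN hN0 fun x hx => (hfg x hx).2 ▸ le_iSup (f · x) n
  choose Φ hΦ hΦf hΦI using hI
  have hΦ' : ∀ n, Monotone (Φ n) := fun n k l hkl x => hΦ n x hkl
  refine hJ.le_of_ae_le_iSup hσ hμ (monotone_diagSup hΦ') hN hN0 (fun x hx => ?_) fun j => ?_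
  · rw [← (hfg x hx).2]
    refine iSup_le fun n => (hΦf n x) ▸ iSup_le fun k => ?_
    exact (ENNReal.coe_le_coe.2 (le_diagSup hΦ' n k x)).trans
      (le_iSup (fun j => (diagSup Φ j x : ℝ≥0∞)) (max n k))
  · refine (elemOInt_le_of_ae_le_iSup hσ hμ (hΦ' j) hN hN0 (fun x hx => ?_)
      fun k => (hΦI j).1 ⟨k, rfl⟩).trans (hK ⟨j, rfl⟩)
    rw [coe_diagSup_apply, hΦf j x]
    exact diagSup_le fun n hn => (le_iSup (fun k => (Φ n k x : ℝ≥0∞)) j).trans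
      ((hΦf n x).trans_le ((hfg x hx).1 hn))

/-- Monotone convergence theorem for order integrals: if `f_n ↑ f` μ-almost
everywhere (pointwise in `[0,∞]`), then `∫ᵒ f_n dμ ↑ ∫ᵒ f dμ` in `E̅`. -/
theorem order_integral_monotone_convergence
    {X : Type*} [MeasurableSpace X]
    {E : Type*} [AddCommGroup E] [PartialOrder E] [IsOrderedAddMonoid E] [Module ℝ E]
    [PosSMulStrictMono ℝ E]
    (hσ : ∀ a : ℕ → E, Monotone a → BddAbove (Set.range a) → ∃ s, IsLUB (Set.range a) s)
    (μ : Set X → WithTop E) (hμ : IsOMeasure μ)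
    (f : ℕ → X → ENNReal) (hf : ∀ n, Measurable (f n))
    (g : X → ENNReal) (hg : Measurable g)
    (hae : ∃ N : Set X, MeasurableSet N ∧ μ N = 0 ∧
      ∀ x ∉ N, (Monotone fun n => f n x) ∧ (⨆ n, f n x) = g x)
    (I : ℕ → WithTop E) (hI : ∀ n, HasOInt μ (f n) (I n))
    (J : WithTop E) (hJ : HasOInt μ g J) :
    Monotone I ∧ IsLUB (Set.range I) J :=
  order_integral_monotone_convergence_general hσ μ hμ f g hae I hI J hJ
end

section
/- Let E be a σ-Dedekind complete vector lattice, F a partially ordered vector space that is monotone complete and has the countable sup property, and T : E → F a strictly positive σ-order continuous linear operator. Then E is Dedekind complete and has the countable sup property, and T is order continuous. -/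
/-!
Let `D ⊆ E` be nonempty, directed and bounded above. Monotone completeness of `F` gives
`s = sup T(D)`, and the countable sup property of `F` gives an increasing sequence `eₙ ∈ D` with
`sup T(eₙ) = s`; its supremum `y` exists by σ-Dedekind completeness and `T y = s` by σ-order
continuity. For `d ∈ D`, `d ⊔ eₙ ↑ d ⊔ y` while `T (d ⊔ eₙ) ≤ s`, so `T (d ⊔ y - y) = 0` and strict
positivity gives `d ≤ y`. Thus `sup D` exists and is attained along a sequence from `D`. Applied to
the finite suprema of a bounded set this is Dedekind completeness, and applied to `{-xᵢ}` for a net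
`xᵢ ↓ 0` it reduces order continuity of `T` to σ-order continuity.
-/

open Set

def CountableSupProperty (F : Type) [Zero F] [Preorder F] : Prop :=
  ∀ (ι : Type) [Preorder ι] [Nonempty ι], (∀ a b : ι, ∃ c, a ≤ c ∧ b ≤ c) →
    ∀ x : ι → F, (∀ i, 0 ≤ x i) → Monotone x → ∀ s : F, IsLUB (range x) s →
      ∃ l : ℕ → ι, IsLUB (range fun n => x (l n)) s

def SigmaOrderContinuous {E F : Type*} [Zero E] [Preorder E] [Zero F] [Preorder F]
    (T : E → F) : Prop :=
  ∀ x : ℕ → E, Antitone x → IsGLB (range x) 0 → IsGLB (range fun n => T (x n)) 0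

def HasSequentialDirectedSups (E : Type*) [Preorder E] : Prop :=
  ∀ D : Set E, D.Nonempty → DirectedOn (· ≤ ·) D → BddAbove D →
    ∃ e : ℕ → E, Monotone e ∧ (∀ n, e n ∈ D) ∧ ∃ y, IsLUB D y ∧ IsLUB (range e) y

lemma exists_monotone_forall_le {ι : Type*} [Preorder ι] [IsDirectedOrder ι] (l : ℕ → ι) :
    ∃ m : ℕ → ι, Monotone m ∧ ∀ n, l n ≤ m n := by
  choose u hu₁ hu₂ using exists_ge_ge (α := ι)
  let m : ℕ → ι := fun n => Nat.rec (l 0) (fun k mk => u mk (l (k + 1))) n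
  refine ⟨m, monotone_nat_of_le_succ fun n => hu₁ _ _, ?_⟩
  rintro (_ | n)
  exacts [le_rfl, hu₂ _ _]

lemma isLUB_range_sup_left {E ι : Type*} [SemilatticeSup E] [Nonempty ι] {e : ι → E} {y : E}
    (hy : IsLUB (range e) y) (d : E) : IsLUB (range fun n => d ⊔ e n) (d ⊔ y) :=
  ⟨forall_mem_range.2 fun n => sup_le_sup_left (hy.1 ⟨n, rfl⟩) d, fun _ hu =>
    sup_le (le_sup_left.trans (hu ⟨Classical.arbitrary ι, rfl⟩))
      (hy.2 <| forall_mem_range.2 fun n => le_sup_right.trans (hu ⟨n, rfl⟩))⟩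

section OrderedAddCommGroup

variable {α β ι : Type*} [AddCommGroup α] [PartialOrder α] [IsOrderedAddMonoid α]
  [AddCommGroup β] [PartialOrder β] [IsOrderedAddMonoid β]

lemma isGLB_range_sub_iff {e : ι → α} {y : α} :
    IsGLB (range fun i => y - e i) 0 ↔ IsLUB (range e) y := by
  refine ⟨fun h => ⟨fun _ ⟨i, hi⟩ => hi ▸ sub_nonneg.1 (h.1 ⟨i, rfl⟩), fun u hu => ?_⟩,
    fun h => ⟨fun _ ⟨i, hi⟩ => hi ▸ sub_nonneg.2 (h.1 ⟨i, rfl⟩), fun c hc => ?_⟩⟩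
  · exact sub_nonpos.1 <| h.2 <| forall_mem_range.2 fun i => sub_le_sub_left (hu ⟨i, rfl⟩) y
  · exact (le_sub_self_iff y).1 <| h.2 <| forall_mem_range.2 fun i =>
      le_sub_comm.1 (hc ⟨i, rfl⟩)

lemma SigmaOrderContinuous.isLUB_range_map {𝓕 : Type*} [FunLike 𝓕 α β]
    [AddMonoidHomClass 𝓕 α β] {T : 𝓕} (hT : SigmaOrderContinuous T) {e : ℕ → α}
    (he : Monotone e) {y : α} (hy : IsLUB (range e) y) :
    IsLUB (range fun n => T (e n)) (T y) := by
  have := hT _ (fun m n hmn => sub_le_sub_left (he hmn) y) (isGLB_range_sub_iff.2 hy)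
  simp only [map_sub] at this
  exact isGLB_range_sub_iff.1 this

end OrderedAddCommGroup

lemma CountableSupProperty.exists_seq_isLUB_image {α F : Type} [Preorder α] [AddCommGroup F]
    [PartialOrder F] [IsOrderedAddMonoid F] (hF : CountableSupProperty F) {D : Set α}
    (hD : D.Nonempty) (hdir : DirectedOn (· ≤ ·) D) {f : α → F} (hf : Monotone f) {s : F}
    (hs : IsLUB (f '' D) s) :
    ∃ e : ℕ → α, Monotone e ∧ (∀ n, e n ∈ D) ∧ IsLUB (range fun n => f (e n)) s := by
  obtain ⟨d₀, hd₀⟩ := hD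
  -- Restricting to the part of `D` above `d₀` makes the net `f d - f d₀` nonnegative.
  let ι := {d : α // d ∈ D ∧ d₀ ≤ d}
  have : Nonempty ι := ⟨⟨d₀, hd₀, le_rfl⟩⟩
  have hdirι (a b : ι) : ∃ c, a ≤ c ∧ b ≤ c :=
    let ⟨c, hc, hac, hbc⟩ := hdir a.1 a.2.1 b.1 b.2.1
    ⟨⟨c, hc, a.2.2.trans hac⟩, hac, hbc⟩
  have : IsDirectedOrder ι := ⟨hdirι⟩
  have hub {u : F} (hu : ∀ d : ι, f d ≤ u) : s ≤ u := hs.2 <| forall_mem_image.2 fun d hd =>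
    let ⟨c, hc, hdc, hd₀c⟩ := hdir d hd d₀ hd₀
    (hf hdc).trans (hu ⟨c, hc, hd₀c⟩)
  have hlub : IsLUB (range fun d : ι => f d - f d₀) (s - f d₀) :=
    ⟨forall_mem_range.2 fun d => sub_le_sub_right (hs.1 (mem_image_of_mem f d.2.1)) _,
      fun u hu => sub_le_iff_le_add.2 <| hub fun d => sub_le_iff_le_add.1 (hu ⟨d, rfl⟩)⟩
  obtain ⟨l, hl⟩ := hF ι hdirι _ (fun d => sub_nonneg.2 (hf d.2.2))
    (fun _ _ h => sub_le_sub_right (hf h) _) _ hlub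
  obtain ⟨m, hm, hlm⟩ := exists_monotone_forall_le l
  refine ⟨fun n => m n, fun _ _ h => hm h, fun n => (m n).2.1,
    forall_mem_range.2 fun n => hs.1 (mem_image_of_mem f (m n).2.1), fun u hu => ?_⟩
  refine (sub_le_sub_iff_right (f d₀)).1 (hl.2 (forall_mem_range.2 fun n => ?_))
  exact sub_le_sub_right ((hf (hlm n)).trans (hu ⟨n, rfl⟩)) _

section LatticeOrderedGroup

variable {E F 𝓕 : Type} [Lattice E] [AddCommGroup E] [IsOrderedAddMonoid E]
  [AddCommGroup F] [PartialOrder F] [IsOrderedAddMonoid F]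
  [FunLike 𝓕 E F] [AddMonoidHomClass 𝓕 E F] {T : 𝓕}

lemma le_of_forall_map_sup_le (hTpos : ∀ x, 0 ≤ x → 0 ≤ T x)
    (hTstrict : ∀ x, 0 ≤ x → T x = 0 → x = 0) (hTσ : SigmaOrderContinuous T) {e : ℕ → E}
    (he : Monotone e) {y : E} (hy : IsLUB (range e) y) {d : E} (hd : ∀ n, T (d ⊔ e n) ≤ T y) :
    d ≤ y := by
  have hle : T (d ⊔ y) ≤ T y :=
    (hTσ.isLUB_range_map (fun _ _ h => sup_le_sup_left (he h) d) (isLUB_range_sup_left hy d)).2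
      (forall_mem_range.2 hd)
  have hge : T y ≤ T (d ⊔ y) := (monotone_iff_map_nonneg T).2 hTpos le_sup_right
  have hzero : d ⊔ y - y = 0 :=
    hTstrict _ (sub_nonneg.2 le_sup_right) (by rw [map_sub, sub_eq_zero, le_antisymm hle hge])
  exact le_sup_left.trans (sub_eq_zero.1 hzero).le

lemma hasSequentialDirectedSups_of_strictlyPositive
    (hσE : ∀ S : Set E, S.Nonempty → S.Countable → BddAbove S → ∃ s, IsLUB S s)
    (hmcF : ∀ S : Set F, S.Nonempty → DirectedOn (· ≤ ·) S → BddAbove S → ∃ s, IsLUB S s)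
    (hcspF : CountableSupProperty F) (hTpos : ∀ x, 0 ≤ x → 0 ≤ T x)
    (hTstrict : ∀ x, 0 ≤ x → T x = 0 → x = 0) (hTσ : SigmaOrderContinuous T) :
    HasSequentialDirectedSups E := by
  intro D hD hdir hbdd
  have hT : Monotone T := (monotone_iff_map_nonneg T).2 hTpos
  obtain ⟨s, hs⟩ := hmcF _ (hD.image T) (hdir.mono_comp fun _ _ h => hT h) (hT.map_bddAbove hbdd)
  obtain ⟨e, he, heD, hTe⟩ := hcspF.exists_seq_isLUB_image hD hdir hT hs
  obtain ⟨y, hy⟩ := hσE _ (range_nonempty e) (countable_range e)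
    (hbdd.mono (range_subset_iff.2 heD))
  have hTy : T y = s := (hTσ.isLUB_range_map he hy).unique hTe
  have hyD : y ∈ upperBounds D := fun d hd => le_of_forall_map_sup_le hTpos hTstrict hTσ he hy
    fun n => let ⟨c, hc, hdc, hec⟩ := hdir d hd (e n) (heD n)
      hTy ▸ (hT (sup_le hdc hec)).trans (hs.1 (mem_image_of_mem T hc))
  exact ⟨e, he, heD, y, ⟨hyD, fun u hu => hy.2 (forall_mem_range.2 fun n => hu (heD n))⟩, hy⟩

end LatticeOrderedGroup

lemma HasSequentialDirectedSups.exists_isLUB {E : Type*} [SemilatticeSup E]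
    (hE : HasSequentialDirectedSups E) (S : Set E) (hS : S.Nonempty) (hbdd : BddAbove S) :
    ∃ s, IsLUB S s := by
  obtain ⟨-, -, -, s, hs, -⟩ := hE (supClosure S) (hS.mono subset_supClosure)
    supClosed_supClosure.directedOn (by rwa [BddAbove, upperBounds_supClosure])
  exact ⟨s, isLUB_supClosure.1 hs⟩

lemma HasSequentialDirectedSups.countableSupProperty {E : Type} [Zero E] [PartialOrder E]
    (hE : HasSequentialDirectedSups E) : CountableSupProperty E := by
  intro ι _ _ hdir x _ hx s hs
  have : IsDirectedOrder ι := ⟨hdir⟩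
  obtain ⟨e, -, heD, y, hy, hye⟩ := hE _ (range_nonempty x) (directedOn_range.2 hx.directed_le)
    ⟨s, hs.1⟩
  choose l hl using heD
  refine ⟨l, ?_⟩
  simp only [hl, ← hy.unique hs]
  exact hye

lemma HasSequentialDirectedSups.isGLB_range_map {E F : Type*} [AddCommGroup E] [PartialOrder E]
    [IsOrderedAddMonoid E] [Zero F] [Preorder F] {T : E → F} (hE : HasSequentialDirectedSups E)
    (hTpos : ∀ x, 0 ≤ x → 0 ≤ T x) (hTσ : SigmaOrderContinuous T) {ι : Type*} [Preorder ι]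
    [Nonempty ι] [IsDirectedOrder ι] {x : ι → E} (hx : Antitone x) (h0 : IsGLB (range x) 0) :
    IsGLB (range fun i => T (x i)) 0 := by
  have hlub : IsLUB (range fun i => -x i) 0 := isGLB_range_sub_iff.1 (by simpa using h0)
  obtain ⟨e, he, heD, y, hy, hye⟩ := hE _ (range_nonempty _)
    (directedOn_range.2 hx.neg.directed_le) hlub.bddAbove
  obtain rfl := hy.unique hlub
  choose l hl using heD
  obtain rfl : e = fun n => -x (l n) := funext fun n => (hl n).symm
  have hxl : IsGLB (range fun n => x (l n)) 0 := by simpa using isGLB_range_sub_iff.2 hye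
  have hTxl := hTσ _ (fun m n h => neg_le_neg_iff.1 (he h)) hxl
  exact ⟨forall_mem_range.2 fun i => hTpos _ (h0.1 ⟨i, rfl⟩),
    fun c hc => hTxl.2 (forall_mem_range.2 fun n => hc ⟨l n, rfl⟩)⟩

theorem dedekind_complete_of_strictly_positive_sigma_order_continuous_general
    {E F : Type}
    [Lattice E] [AddCommGroup E] [CovariantClass E E (· + ·) (· ≤ ·)]
    [Module ℝ E]
    [AddCommGroup F] [PartialOrder F] [IsOrderedAddMonoid F] [Module ℝ F]
    (hσE : ∀ S : Set E, S.Nonempty → S.Countable → BddAbove S → ∃ s, IsLUB S s)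
    (hmcF : ∀ S : Set F, S.Nonempty → DirectedOn (· ≤ ·) S → BddAbove S → ∃ s, IsLUB S s)
    (hcspF : ∀ (ι : Type) [Preorder ι] [Nonempty ι], (∀ a b : ι, ∃ c, a ≤ c ∧ b ≤ c) →
      ∀ x : ι → F, (∀ i, 0 ≤ x i) → Monotone x → ∀ s : F, IsLUB (Set.range x) s →
        ∃ l : ℕ → ι, IsLUB (Set.range fun n => x (l n)) s)
    (T : E →ₗ[ℝ] F)
    (hTpos : ∀ x : E, 0 ≤ x → 0 ≤ T x)
    (hTstrict : ∀ x : E, 0 ≤ x → T x = 0 → x = 0)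
    (hTσ : ∀ x : ℕ → E, Antitone x → IsGLB (Set.range x) 0 →
      IsGLB (Set.range fun n => T (x n)) 0) :
    (∀ S : Set E, S.Nonempty → BddAbove S → ∃ s, IsLUB S s) ∧
    (∀ (ι : Type) [Preorder ι] [Nonempty ι], (∀ a b : ι, ∃ c, a ≤ c ∧ b ≤ c) →
      ∀ x : ι → E, (∀ i, 0 ≤ x i) → Monotone x → ∀ s : E, IsLUB (Set.range x) s →
        ∃ l : ℕ → ι, IsLUB (Set.range fun n => x (l n)) s) ∧
    (∀ (ι : Type) [Preorder ι] [Nonempty ι], (∀ a b : ι, ∃ c, a ≤ c ∧ b ≤ c) →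
      ∀ x : ι → E, (∀ i j : ι, i ≤ j → x j ≤ x i) → IsGLB (Set.range x) 0 →
        IsGLB (Set.range fun i => T (x i)) 0) := by
  have : IsOrderedAddMonoid E := { add_le_add_left := fun _ _ h c => add_le_add_left h c }
  have hE : HasSequentialDirectedSups E :=
    hasSequentialDirectedSups_of_strictlyPositive hσE hmcF hcspF hTpos hTstrict hTσ
  refine ⟨hE.exists_isLUB, hE.countableSupProperty, fun ι _ _ hdir x hx h0 => ?_⟩
  have : IsDirectedOrder ι := ⟨hdir⟩
  exact hE.isGLB_range_map hTpos hTσ (fun i j h => hx i j h) h0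

/-- Let `E` be a σ-Dedekind complete vector lattice, `F` a monotone complete
partially ordered vector space with the countable sup property, and
`T : E → F` a strictly positive σ-order continuous linear operator.  Then `E`
is Dedekind complete and has the countable sup property, and `T` is order
continuous. -/
theorem dedekind_complete_of_strictly_positive_sigma_order_continuous
    {E F : Type}
    [Lattice E] [AddCommGroup E] [CovariantClass E E (· + ·) (· ≤ ·)]
    [Module ℝ E]
    [AddCommGroup F] [PartialOrder F] [IsOrderedAddMonoid F] [Module ℝ F]
    [PosSMulStrictMono ℝ F] [PosSMulReflectLT ℝ F]
    (hsmulE : ∀ (r : ℝ) (x y : E), 0 ≤ r → x ≤ y → r • x ≤ r • y)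
    (hσE : ∀ S : Set E, S.Nonempty → S.Countable → BddAbove S → ∃ s, IsLUB S s)
    (hmcF : ∀ S : Set F, S.Nonempty → DirectedOn (· ≤ ·) S → BddAbove S → ∃ s, IsLUB S s)
    (hcspF : ∀ (ι : Type) [Preorder ι] [Nonempty ι], (∀ a b : ι, ∃ c, a ≤ c ∧ b ≤ c) →
      ∀ x : ι → F, (∀ i, 0 ≤ x i) → Monotone x → ∀ s : F, IsLUB (Set.range x) s →
        ∃ l : ℕ → ι, IsLUB (Set.range fun n => x (l n)) s)
    (T : E →ₗ[ℝ] F)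
    (hTpos : ∀ x : E, 0 ≤ x → 0 ≤ T x)
    (hTstrict : ∀ x : E, 0 ≤ x → T x = 0 → x = 0)
    (hTσ : ∀ x : ℕ → E, Antitone x → IsGLB (Set.range x) 0 →
      IsGLB (Set.range fun n => T (x n)) 0) :
    (∀ S : Set E, S.Nonempty → BddAbove S → ∃ s, IsLUB S s) ∧
    (∀ (ι : Type) [Preorder ι] [Nonempty ι], (∀ a b : ι, ∃ c, a ≤ c ∧ b ≤ c) →
      ∀ x : ι → E, (∀ i, 0 ≤ x i) → Monotone x → ∀ s : E, IsLUB (Set.range x) s →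
        ∃ l : ℕ → ι, IsLUB (Set.range fun n => x (l n)) s) ∧
    (∀ (ι : Type) [Preorder ι] [Nonempty ι], (∀ a b : ι, ∃ c, a ≤ c ∧ b ≤ c) →
      ∀ x : ι → E, (∀ i j : ι, i ≤ j → x j ≤ x i) → IsGLB (Set.range x) 0 →
        IsGLB (Set.range fun i => T (x i)) 0) :=
  dedekind_complete_of_strictly_positive_sigma_order_continuous_general hσE hmcF hcspF T hTpos
    hTstrict hTσ
end
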